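/- arXiv:1005.3159 — 15 statements merged into one kernel-verified Lean document; each statement's English description precedes it below -/
import Mathlib

section
/- Let n ≥ 1, let A, X be n×n complex matrices and let p be a polynomial with complex coefficients such that XA − AX = p(X). Then for every integer i ≥ 1 one has X^i A − A X^i = i · X^{i−1} p(X). -/
theorem stmt0 (n : ℕ) (hn : 1 ≤ n) (A X : Matrix (Fin n) (Fin n) ℂ)
    (p : Polynomial ℂ) (h : X * A - A * X = Polynomial.aeval X p)
    (i : ℕ) (hi : 1 ≤ i) :
    X ^ i * A - A * X ^ i = (i : ℂ) • (X ^ (i - 1) * Polynomial.aeval X p) := by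
  have hc : Commute X (Polynomial.aeval X p) := by
    have h1 : Polynomial.aeval X (Polynomial.X * p) = X * Polynomial.aeval X p := by simp
    have h2 : Polynomial.aeval X (p * Polynomial.X) = Polynomial.aeval X p * X := by simp
    unfold Commute SemiconjBy
    rw [← h1, ← h2, mul_comm]
  induction i with
  | zero => omega
  | succ k ih =>
    rcases Nat.eq_zero_or_pos k with hk | hk
    · subst hk; simpa using h
    · obtain ⟨m, rfl⟩ : ∃ m, k = m + 1 := ⟨k - 1, (Nat.succ_pred_eq_of_pos hk).symm⟩
      have ihk := ih hk
      have key : X ^ (m + 1 + 1) * A - A * X ^ (m + 1 + 1)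
          = X * (X ^ (m + 1) * A - A * X ^ (m + 1)) + (X * A - A * X) * X ^ (m + 1) := by
        noncomm_ring
        simp only [← mul_assoc, ((Commute.refl X).pow_right m).eq]
      rw [key, ihk, h]
      simp only [Nat.add_sub_cancel]
      rw [(hc.pow_left (m + 1)).symm.eq]
      push_cast
      rw [mul_smul_comm, ← mul_assoc, ← pow_succ']
      module
end

section
/- Let n ≥ 1, let A, X be n×n complex matrices and let p be a polynomial with complex coefficients such that XA − AX = p(X). Then A and X are simultaneously triangularizable: there exists an invertible n×n complex matrix P such that both P⁻¹AP and P⁻¹XP are upper triangular (all entries below the diagonal vanish). -/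
/-!
Differentiating `x a - a x = p(x)` gives `q(x) a - a q(x) = q'(x) p(x)` for every polynomial `q`,
so the span of `K[x]` and `a` is a Lie algebra whose derived algebra lies in the commutative
algebra `K[x]`. It is solvable, and Lie's theorem provides a common eigenvector `v` of `a` and `x`.
After a change of basis sending the first basis vector to `v`, both matrices have first column
`(*, 0, …, 0)`, and their lower right blocks again satisfy `x a - a x = p(x)`, because taking the
lower right block is an algebra homomorphism on such matrices. Induction on the size concludes.
-/

open Polynomial Matrix

section Commutator

variable {R B : Type*} [CommRing R] [Ring B] [Algebra R B] {a x : B} {p : R[X]}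

theorem map_commutator_eq_aeval {C : Type*} [Ring C] [Algebra R C] (f : B →ₐ[R] C)
    (h : x * a - a * x = aeval x p) : f x * f a - f a * f x = aeval (f x) p := by
  rw [aeval_algHom_apply, ← h, map_sub, map_mul, map_mul]

theorem commutator_eq_aeval_of_injective {C : Type*} [Ring C] [Algebra R C] {f : B →ₐ[R] C}
    (hf : Function.Injective f) (h : f x * f a - f a * f x = aeval (f x) p) :
    x * a - a * x = aeval x p :=
  hf (by rwa [map_sub, map_mul, map_mul, ← aeval_algHom_apply])

theorem aeval_mul_sub_mul_eq_aeval_derivative_mul (h : x * a - a * x = aeval x p) (q : R[X]) :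
    aeval x q * a - a * aeval x q = aeval x (derivative q * p) := by
  have mul_X : ∀ q : R[X], aeval x q * a - a * aeval x q = aeval x (derivative q * p) →
      aeval x (q * X) * a - a * aeval x (q * X) = aeval x (derivative (q * X) * p) := by
    intro q hq
    have leibniz : aeval x (q * X) * a - a * aeval x (q * X)
        = aeval x q * (x * a - a * x) + (aeval x q * a - a * aeval x q) * x := by
      rw [map_mul, aeval_X]
      noncomm_ring
    rw [leibniz, h, hq, derivative_mul, derivative_X, mul_one,
      show (derivative q * X + q) * p = derivative q * p * X + q * p by ring,
      map_add, map_mul _ _ X, map_mul _ q, aeval_X, add_comm]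
  induction q using Polynomial.induction_on with
  | C c => simp [Algebra.commutes]
  | add q r hq hr => simp only [map_add, add_mul, mul_add, ← hq, ← hr]; abel
  | monomial k c ih => simpa only [pow_succ, mul_assoc] using mul_X _ ih

attribute [local instance] LieRing.ofAssociativeRing

theorem lie_aeval_add_smul (h : x * a - a * x = aeval x p) (q r : R[X]) (c d : R) :
    ⁅aeval x q + c • a, aeval x r + d • a⁆
      = aeval x (d • (derivative q * p) - c • (derivative r * p)) := by
  have hqr : aeval x q * aeval x r = aeval x r * aeval x q :=
    ((Commute.all q r).map (aeval x)).eq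
  rw [map_sub, map_smul, map_smul, ← aeval_mul_sub_mul_eq_aeval_derivative_mul h,
    ← aeval_mul_sub_mul_eq_aeval_derivative_mul h, Ring.lie_def, ← sub_eq_zero]
  convert sub_eq_zero.mpr hqr using 1
  simp only [add_mul, mul_add, smul_mul_assoc, mul_smul_comm, smul_sub]
  module

def lieSubalgebraOfCommutatorEqAeval (h : x * a - a * x = aeval x p) : LieSubalgebra R B where
  carrier := {f | ∃ (q : R[X]) (c : R), aeval x q + c • a = f}
  zero_mem' := ⟨0, 0, by simp⟩
  add_mem' := by
    rintro _ _ ⟨q, c, rfl⟩ ⟨r, d, rfl⟩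
    exact ⟨q + r, c + d, by rw [map_add, add_smul]; abel⟩
  smul_mem' := by
    rintro t _ ⟨q, c, rfl⟩
    exact ⟨t • q, t * c, by rw [map_smul, smul_add, mul_smul]⟩
  lie_mem' := by
    rintro _ _ ⟨q, c, rfl⟩ ⟨r, d, rfl⟩
    exact ⟨_, 0, by rw [zero_smul, add_zero, lie_aeval_add_smul h]⟩

theorem left_mem_lieSubalgebraOfCommutatorEqAeval (h : x * a - a * x = aeval x p) :
    a ∈ lieSubalgebraOfCommutatorEqAeval h :=
  ⟨0, 1, by simp⟩

theorem right_mem_lieSubalgebraOfCommutatorEqAeval (h : x * a - a * x = aeval x p) :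
    x ∈ lieSubalgebraOfCommutatorEqAeval h :=
  ⟨X, 0, by simp⟩

instance isSolvable_lieSubalgebraOfCommutatorEqAeval (h : x * a - a * x = aeval x p) :
    LieAlgebra.IsSolvable (lieSubalgebraOfCommutatorEqAeval h) := by
  set L := lieSubalgebraOfCommutatorEqAeval h
  have derived_le : (LieAlgebra.derivedSeries R L 1 : Submodule R L) ≤
      (LinearMap.range (aeval x).toLinearMap).comap (L.incl : L →ₗ[R] B) := by
    rw [LieAlgebra.coe_derivedSeries_one_eq, Submodule.span_le]
    rintro _ ⟨⟨_, q, c, rfl⟩, ⟨_, r, d, rfl⟩, rfl⟩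
    exact ⟨_, (lie_aeval_add_smul h q r c d).symm⟩
  refine LieAlgebra.IsSolvable.mk (R := R) (k := 2) ?_
  rw [LieAlgebra.derivedSeries_def, LieAlgebra.derivedSeriesOfIdeal_succ,
    LieSubmodule.lie_eq_bot_iff]
  intro f hf g hg
  obtain ⟨q, hq⟩ := derived_le hf
  obtain ⟨r, hr⟩ := derived_le hg
  change aeval x q = f at hq
  change aeval x r = g at hr
  apply Subtype.ext
  rw [LieSubalgebra.coe_bracket, ZeroMemClass.coe_zero, Ring.lie_def, sub_eq_zero, ← hq, ← hr]
  exact ((Commute.all q r).map (aeval x)).eq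

theorem Module.End.exists_common_eigenvector_of_commutator_eq_aeval {K V : Type*} [Field K]
    [IsAlgClosed K] [CharZero K] [AddCommGroup V] [Module K V] [FiniteDimensional K V]
    [Nontrivial V] {a x : Module.End K V} {p : K[X]} (h : x * a - a * x = aeval x p) :
    ∃ v : V, v ≠ 0 ∧ (∃ μ : K, a v = μ • v) ∧ ∃ ν : K, x v = ν • v := by
  obtain ⟨χ, hχ⟩ := LieModule.exists_nontrivial_weightSpace_of_isSolvable K
    (lieSubalgebraOfCommutatorEqAeval h) V
  obtain ⟨⟨v, hv⟩, hv0⟩ := exists_ne (0 : LieModule.weightSpace V χ)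
  rw [LieModule.mem_weightSpace] at hv
  exact ⟨v, by simpa using hv0, ⟨_, hv ⟨a, left_mem_lieSubalgebraOfCommutatorEqAeval h⟩⟩,
    ⟨_, hv ⟨x, right_mem_lieSubalgebraOfCommutatorEqAeval h⟩⟩⟩

end Commutator

theorem exists_linearEquiv_apply_eq {K V : Type*} [Field K] [AddCommGroup V] [Module K V]
    {v w : V} (hv : v ≠ 0) (hw : w ≠ 0) : ∃ g : V ≃ₗ[K] V, g v = w := by
  obtain ⟨g, hg⟩ := Submodule.exists_linearEquiv_restrict_eq
    ((LinearEquiv.toSpanNonzeroSingleton K V v hv).symm.trans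
      (LinearEquiv.toSpanNonzeroSingleton K V w hw))
  have hgv := hg ⟨v, Submodule.mem_span_singleton_self v⟩
  rw [LinearEquiv.trans_apply, ← LinearEquiv.coord, LinearEquiv.coord_self,
    LinearEquiv.toSpanNonzeroSingleton_one] at hgv
  exact ⟨g, hgv.symm⟩

namespace Matrix

section Field

variable {K n : Type*} [Field K] [Fintype n] [DecidableEq n]

theorem exists_isUnit_mulVec_eq {v w : n → K} (hv : v ≠ 0) (hw : w ≠ 0) :
    ∃ Q : Matrix n n K, IsUnit Q ∧ Q *ᵥ v = w := by
  obtain ⟨g, hg⟩ := exists_linearEquiv_apply_eq (K := K) hv hw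
  refine ⟨LinearMap.toMatrix' g,
    (LinearMap.GeneralLinearGroup.ofLinearEquiv g).isUnit.map LinearMap.toMatrixAlgEquiv', ?_⟩
  rw [← hg]
  exact LinearMap.toMatrix'_mulVec (g : (n → K) →ₗ[K] n → K) v

theorem exists_common_eigenvector_of_commutator_eq_aeval [IsAlgClosed K] [CharZero K]
    [Nonempty n] {A X : Matrix n n K} {p : K[X]} (h : X * A - A * X = aeval X p) :
    ∃ v : n → K, v ≠ 0 ∧ (∃ μ : K, A *ᵥ v = μ • v) ∧ ∃ ν : K, X *ᵥ v = ν • v :=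
  Module.End.exists_common_eigenvector_of_commutator_eq_aeval
    (map_commutator_eq_aeval toLinAlgEquiv'.toAlgHom h)

end Field

variable {R : Type*} [CommRing R] {m : ℕ}

variable (R m) in
def firstLineStabilizer : Subalgebra R (Matrix (Fin (m + 1)) (Fin (m + 1)) R) where
  carrier := {M | ∀ i : Fin m, M i.succ 0 = 0}
  mul_mem' {M N} hM hN i := by
    rw [mul_apply, Fin.sum_univ_succ, hM i, zero_mul, zero_add]
    exact Finset.sum_eq_zero fun k _ => by rw [hN k, mul_zero]
  add_mem' {M N} hM hN i := by rw [add_apply, hM i, hN i, add_zero]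
  algebraMap_mem' c i := by
    rw [algebraMap_matrix_apply, if_neg (Fin.succ_ne_zero i)]

theorem conj_mem_firstLineStabilizer {Q M : Matrix (Fin (m + 1)) (Fin (m + 1)) R} (hQ : IsUnit Q)
    {c : R} (hM : M *ᵥ (Q *ᵥ Pi.single 0 1) = c • (Q *ᵥ Pi.single 0 1)) :
    Q⁻¹ * M * Q ∈ firstLineStabilizer R m := by
  intro i
  have hconj : (Q⁻¹ * M * Q) *ᵥ Pi.single 0 1 = c • Pi.single 0 1 := by
    rw [← mulVec_mulVec, ← mulVec_mulVec, hM, mulVec_smul, mulVec_mulVec,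
      nonsing_inv_mul _ ((isUnit_iff_isUnit_det Q).mp hQ), one_mulVec]
  simpa [mulVec_single_one, Fin.succ_ne_zero] using congrFun hconj i.succ

namespace firstLineStabilizer

def lowerRight : firstLineStabilizer R m →ₐ[R] Matrix (Fin m) (Fin m) R where
  toFun M := (M : Matrix (Fin (m + 1)) (Fin (m + 1)) R).submatrix Fin.succ Fin.succ
  map_one' := submatrix_one_embedding (Fin.succEmb m)
  map_mul' M N := by
    ext i j
    simp only [submatrix_apply, Subalgebra.coe_mul, mul_apply, Fin.sum_univ_succ, M.2 i, zero_mul,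
      zero_add]
  map_zero' := rfl
  map_add' _ _ := rfl
  commutes' c := by
    ext i j
    simp [algebraMap_matrix_apply, Fin.succ_inj]

def blockDiagOne : Matrix (Fin m) (Fin m) R →* firstLineStabilizer R m where
  toFun P := ⟨of (Fin.cons (Pi.single 0 1) fun i => Fin.cons 0 (P i)), fun _ => rfl⟩
  map_one' := by
    ext i j
    refine Fin.cases ?_ (fun i => ?_) i <;> refine Fin.cases ?_ (fun j => ?_) j <;>
      simp [one_apply, Fin.succ_ne_zero, (Fin.succ_ne_zero _).symm]
  map_mul' P Q := by
    ext i j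
    refine Fin.cases ?_ (fun i => ?_) i <;> refine Fin.cases ?_ (fun j => ?_) j <;>
      simp [mul_apply, Fin.sum_univ_succ]

theorem lowerRight_blockDiagOne (P : Matrix (Fin m) (Fin m) R) :
    lowerRight (blockDiagOne P) = P := rfl

end firstLineStabilizer

theorem blockTriangular_id_iff_succ (M : Matrix (Fin (m + 1)) (Fin (m + 1)) R) :
    M.BlockTriangular id ↔
      M ∈ firstLineStabilizer R m ∧ (M.submatrix Fin.succ Fin.succ).BlockTriangular id := by
  refine ⟨fun h => ⟨fun i => h (Fin.succ_pos i), fun i j hij => h (Fin.succ_lt_succ_iff.mpr hij)⟩,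
    fun ⟨h0, h⟩ i j hij => ?_⟩
  induction i using Fin.cases with
  | zero => exact absurd hij (Fin.not_lt_zero j)
  | succ i =>
    induction j using Fin.cases with
    | zero => exact h0 i
    | succ j => exact h (Fin.succ_lt_succ_iff.mp hij)

section Triangularizable

variable {n : Type*} [Fintype n] [DecidableEq n] [LinearOrder n]

def IsSimultaneouslyTriangularizable (s : Set (Matrix n n R)) : Prop :=
  ∃ P : Matrix n n R, IsUnit P ∧ ∀ M ∈ s, (P⁻¹ * M * P).BlockTriangular id

theorem IsSimultaneouslyTriangularizable.of_image_conj {Q : Matrix n n R} (hQ : IsUnit Q)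
    {s : Set (Matrix n n R)}
    (h : IsSimultaneouslyTriangularizable ((fun M => Q⁻¹ * M * Q) '' s)) :
    IsSimultaneouslyTriangularizable s := by
  obtain ⟨P, hP, hPs⟩ := h
  refine ⟨Q * P, hQ.mul hP, fun M hM => ?_⟩
  simpa only [Matrix.mul_inv_rev, Matrix.mul_assoc] using hPs _ ⟨M, hM, rfl⟩

end Triangularizable

open firstLineStabilizer in
theorem IsSimultaneouslyTriangularizable.of_image_lowerRight {s : Set (firstLineStabilizer R m)}
    (h : IsSimultaneouslyTriangularizable (lowerRight '' s)) :
    IsSimultaneouslyTriangularizable (Subtype.val '' s) := by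
  obtain ⟨P, hP, hPs⟩ := h
  have hinv : (blockDiagOne P⁻¹ : Matrix (Fin (m + 1)) (Fin (m + 1)) R)
      = (blockDiagOne P : Matrix (Fin (m + 1)) (Fin (m + 1)) R)⁻¹ := by
    refine (inv_eq_left_inv ?_).symm
    rw [← Subalgebra.coe_mul, ← map_mul, nonsing_inv_mul _ ((isUnit_iff_isUnit_det P).mp hP),
      map_one, Subalgebra.coe_one]
  refine ⟨blockDiagOne P, (hP.map blockDiagOne).map (firstLineStabilizer R m).val, ?_⟩
  rintro _ ⟨M, hM, rfl⟩
  rw [← hinv, ← Subalgebra.coe_mul, ← Subalgebra.coe_mul, blockTriangular_id_iff_succ]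
  refine ⟨SetLike.coe_mem _, ?_⟩
  change (lowerRight (blockDiagOne P⁻¹ * M * blockDiagOne P)).BlockTriangular id
  rw [map_mul, map_mul, lowerRight_blockDiagOne, lowerRight_blockDiagOne]
  exact hPs _ ⟨M, hM, rfl⟩

theorem isSimultaneouslyTriangularizable_of_commutator_eq_aeval {K : Type*} [Field K]
    [IsAlgClosed K] [CharZero K] {n : ℕ} {A X : Matrix (Fin n) (Fin n) K} {p : K[X]}
    (h : X * A - A * X = aeval X p) : IsSimultaneouslyTriangularizable {A, X} := by
  induction n with
  | zero => exact ⟨1, isUnit_one, fun M _ i => i.elim0⟩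
  | succ m ih =>
    obtain ⟨v, hv, ⟨μ, hAv⟩, ⟨ν, hXv⟩⟩ := exists_common_eigenvector_of_commutator_eq_aeval h
    obtain ⟨Q, hQ, hQv⟩ := exists_isUnit_mulVec_eq (Pi.single_ne_zero_iff.mpr one_ne_zero) hv
    have hA₁ := conj_mem_firstLineStabilizer hQ (hQv ▸ hAv)
    have hX₁ := conj_mem_firstLineStabilizer hQ (hQv ▸ hXv)
    have hconj : Q⁻¹ * X * Q * (Q⁻¹ * A * Q) - Q⁻¹ * A * Q * (Q⁻¹ * X * Q)
        = aeval (Q⁻¹ * X * Q) p := by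
      simpa only [MulSemiringAction.toAlgHom_apply, ConjAct.units_smul_def,
        ConjAct.ofConjAct_toConjAct, inv_inv, IsUnit.unit_spec, coe_units_inv] using
        map_commutator_eq_aeval (MulSemiringAction.toAlgHom K _ (ConjAct.toConjAct hQ.unit⁻¹)) h
    have h₁ : (⟨_, hX₁⟩ * ⟨_, hA₁⟩ - ⟨_, hA₁⟩ * ⟨_, hX₁⟩ : firstLineStabilizer K m)
        = aeval ⟨_, hX₁⟩ p :=
      commutator_eq_aeval_of_injective (f := (firstLineStabilizer K m).val)
        Subtype.val_injective hconj
    have hconj_tri := IsSimultaneouslyTriangularizable.of_image_lowerRight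
      (s := {⟨_, hA₁⟩, ⟨_, hX₁⟩}) (by rw [Set.image_pair]; exact ih (map_commutator_eq_aeval _ h₁))
    rw [Set.image_pair] at hconj_tri
    exact IsSimultaneouslyTriangularizable.of_image_conj hQ (by rwa [Set.image_pair])

end Matrix

theorem stmt1_general (n : ℕ) (A X : Matrix (Fin n) (Fin n) ℂ)
    (p : Polynomial ℂ) (h : X * A - A * X = Polynomial.aeval X p) :
    ∃ P : Matrix (Fin n) (Fin n) ℂ, IsUnit P ∧
      (∀ i j : Fin n, j < i → (P⁻¹ * A * P) i j = 0) ∧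
      (∀ i j : Fin n, j < i → (P⁻¹ * X * P) i j = 0) := by
  obtain ⟨P, hP, hPs⟩ := Matrix.isSimultaneouslyTriangularizable_of_commutator_eq_aeval h
  exact ⟨P, hP, fun _ _ hij => hPs A (by simp) hij, fun _ _ hij => hPs X (by simp) hij⟩

theorem stmt1 (n : ℕ) (hn : 1 ≤ n) (A X : Matrix (Fin n) (Fin n) ℂ)
    (p : Polynomial ℂ) (h : X * A - A * X = Polynomial.aeval X p) :
    ∃ P : Matrix (Fin n) (Fin n) ℂ, IsUnit P ∧
      (∀ i j : Fin n, j < i → (P⁻¹ * A * P) i j = 0) ∧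
      (∀ i j : Fin n, j < i → (P⁻¹ * X * P) i j = 0) :=
  stmt1_general n A X p h
end

section
/- Let n ≥ 1, let A, X be n×n complex matrices and let p be a polynomial with complex coefficients such that XA − AX = p(X). Then the matrix XA − AX is nilpotent and every element μ of the spectrum of X satisfies p(μ) = 0. -/
/-!
Since `X` commutes with `q(X)` for every polynomial `q`, the hypothesis gives
`p(X) q(X) = X (A q(X)) - (A q(X)) X`, so `tr (p q)(X) = 0`. On the generalized eigenspace
`V_μ` of `X`, `r(X)` acts as `r(μ)` plus a nilpotent, hence `tr r(X) = ∑_μ dim V_μ · r(μ)`;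
choosing `q` to vanish at every eigenvalue other than `μ` leaves `dim V_μ · p(μ) q(μ) = 0`, so
`p(μ) = 0`.
Then every root of the minimal polynomial of `X` is a root of `p`, so the (split) minimal
polynomial divides a power of `p`, and `p(X)` is nilpotent.
-/

open Polynomial Module LinearMap

theorem Polynomial.isNilpotent_aeval_sub_algebraMap_eval {R A : Type*} [CommRing R] [Ring A]
    [Algebra R A] {a : A} {μ : R} (ha : IsNilpotent (a - algebraMap R A μ)) (r : R[X]) :
    IsNilpotent (aeval a r - algebraMap R A (r.eval μ)) := by
  obtain ⟨q, hq⟩ := dvd_iff_isRoot.mpr (show IsRoot (r - C (r.eval μ)) μ by simp)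
  have hfactor : aeval a r - algebraMap R A (r.eval μ) = (a - algebraMap R A μ) * aeval a q := by
    simpa using congrArg (aeval a) hq
  rw [hfactor]
  refine Commute.isNilpotent_mul_right ?_ ha
  have hcomm : Commute (aeval a (X - C μ)) (aeval a q) := (Commute.all _ _).map (aeval a)
  rwa [map_sub, aeval_X, aeval_C] at hcomm

theorem Polynomial.commute_aeval_self {R A : Type*} [CommRing R] [Ring A] [Algebra R A] (a : A)
    (r : R[X]) : Commute a (aeval a r) := by
  simpa using (commute_X r).map (aeval a)

namespace Module.End

theorem restrict_aeval {R M : Type*} [CommRing R] [AddCommGroup M] [Module R M]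
    (f : End R M) {N : Submodule R M} (hf : Set.MapsTo f N N) (r : R[X])
    (hr : Set.MapsTo (aeval f r) N N) :
    (aeval f r).restrict hr = aeval (f.restrict hf) r := by
  ext v
  change aeval f r (v : M) = _
  clear hr
  induction r using Polynomial.induction_on' with
  | add r s hr hs => simp [hr, hs]
  | monomial n c => simp [Module.End.pow_restrict n hf]

variable {K V : Type*} [Field K] [AddCommGroup V] [Module K V] [FiniteDimensional K V]

theorem maxGenEigenspace_ne_bot_iff_mem_spectrum (f : End K V) (μ : K) :
    f.maxGenEigenspace μ ≠ ⊥ ↔ μ ∈ spectrum K f := by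
  rw [← hasEigenvalue_iff_mem_spectrum]
  exact ⟨fun h => HasUnifEigenvalue.lt one_pos h, fun h => HasUnifEigenvalue.lt (by simp) h⟩

theorem trace_restrict_aeval_maxGenEigenspace (f : End K V) (μ : K) (r : K[X])
    (hr : Set.MapsTo (aeval f r) (f.maxGenEigenspace μ) (f.maxGenEigenspace μ)) :
    trace K _ ((aeval f r).restrict hr) = finrank K (f.maxGenEigenspace μ) * r.eval μ := by
  have hf := f.mapsTo_maxGenEigenspace_of_comm rfl μ
  have hsub : IsNilpotent (f.restrict hf - algebraMap K _ μ) :=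
    f.isNilpotent_restrict_maxGenEigenspace_sub_algebraMap μ
  have hnil := isNilpotent_aeval_sub_algebraMap_eval hsub r
  rw [restrict_aeval f hf]
  simpa [mul_comm] using
    trace_comp_eq_mul_of_commute_of_isNilpotent (f := LinearMap.id) _ (Commute.one_left _) hnil

theorem trace_aeval [IsAlgClosed K] (f : End K V) (r : K[X]) :
    trace K V (aeval f r) =
      ∑ μ ∈ f.finite_spectrum.toFinset, finrank K (f.maxGenEigenspace μ) * r.eval μ := by
  classical
  have hsupp : {μ | f.maxGenEigenspace μ ≠ ⊥} = spectrum K f := by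
    ext μ
    exact f.maxGenEigenspace_ne_bot_iff_mem_spectrum μ
  have hfin : {μ | f.maxGenEigenspace μ ≠ ⊥}.Finite := hsupp ▸ f.finite_spectrum
  have hint := DirectSum.isInternal_submodule_of_iSupIndep_of_iSup_eq_top
    f.independent_maxGenEigenspace f.iSup_maxGenEigenspace_eq_top
  have hmaps μ := f.mapsTo_maxGenEigenspace_of_comm (commute_aeval_self f r) μ
  rw [trace_eq_sum_trace_restrict' hint hfin hmaps]
  simp only [trace_restrict_aeval_maxGenEigenspace]
  congr 1
  ext μ
  simp [hsupp]

theorem trace_aeval_mul_eq_zero_of_commutator_eq_aeval {R M : Type*} [CommRing R] [AddCommGroup M]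
    [Module R M] [Module.Free R M] [Module.Finite R M] {f a : End R M} {p : R[X]}
    (h : f * a - a * f = aeval f p) (q : R[X]) : trace R M (aeval f (p * q)) = 0 := by
  have hcomm : aeval f (p * q) = f * (a * aeval f q) - a * aeval f q * f := by
    rw [map_mul, ← h, sub_mul, mul_assoc, mul_assoc a, (commute_aeval_self f q).eq, mul_assoc]
  rw [hcomm, map_sub, trace_mul_comm, sub_self]

theorem eval_eq_zero_of_forall_trace_aeval_mul_eq_zero [IsAlgClosed K] [CharZero K]
    (f : End K V) {p : K[X]} (h : ∀ q, trace K V (aeval f (p * q)) = 0) {μ : K}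
    (hμ : μ ∈ spectrum K f) : p.eval μ = 0 := by
  classical
  set s := f.finite_spectrum.toFinset
  set q : K[X] := ∏ ν ∈ s.erase μ, (X - C ν)
  have hq_ne : q.eval μ ≠ 0 := by
    simp [q, eval_prod, Finset.prod_eq_zero_iff, sub_eq_zero]
  have hq_eq : ∀ ν ∈ s, ν ≠ μ → q.eval ν = 0 := fun ν hν hne => by
    simp [q, eval_prod, Finset.prod_eq_zero_iff, sub_eq_zero, hν, hne]
  have hdim : (finrank K (f.maxGenEigenspace μ) : K) ≠ 0 := by
    rw [Nat.cast_ne_zero, Ne, Submodule.finrank_eq_zero]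
    exact (f.maxGenEigenspace_ne_bot_iff_mem_spectrum μ).mpr hμ
  have htrace := h q
  rw [trace_aeval, Finset.sum_eq_single_of_mem μ (by simpa [s] using hμ)
    (fun ν hν hne => by rw [eval_mul, hq_eq ν hν hne, mul_zero, mul_zero])] at htrace
  simpa [eval_mul, hdim, hq_ne] using htrace

theorem isNilpotent_aeval_of_forall_mem_spectrum [IsAlgClosed K] (f : End K V) {p : K[X]}
    (h : ∀ μ ∈ spectrum K f, p.eval μ = 0) : IsNilpotent (aeval f p) := by
  have hmonic := minpoly.monic (Algebra.IsIntegral.isIntegral (R := K) f)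
  have hdvd : minpoly K f ∣ p ^ Multiset.card (minpoly K f).roots := by
    rw [(IsAlgClosed.splits (minpoly K f)).eq_prod_roots_of_monic hmonic]
    simpa using Multiset.prod_dvd_prod_of_dvd (S := (minpoly K f).roots) (fun μ => X - C μ)
      (fun _ => p) fun μ hμ => dvd_iff_isRoot.mpr <| h μ <| hasEigenvalue_iff_mem_spectrum.mp <|
        hasEigenvalue_of_isRoot (isRoot_of_mem_roots hμ)
  obtain ⟨t, ht⟩ := hdvd
  exact ⟨_, by rw [← map_pow, ht, map_mul, minpoly.aeval, zero_mul]⟩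

end Module.End

theorem stmt2_general (n : ℕ) (A X : Matrix (Fin n) (Fin n) ℂ)
    (p : Polynomial ℂ) (h : X * A - A * X = Polynomial.aeval X p) :
    IsNilpotent (X * A - A * X) ∧
      ∀ μ ∈ spectrum ℂ X, Polynomial.eval μ p = 0 := by
  set e := Matrix.toLinAlgEquiv' (R := ℂ) (n := Fin n)
  have he : e X * e A - e A * e X = aeval (e X) p := by
    simpa [aeval_algEquiv] using congrArg e h
  have heval : ∀ μ ∈ spectrum ℂ X, p.eval μ = 0 := fun μ hμ =>
    Module.End.eval_eq_zero_of_forall_trace_aeval_mul_eq_zero (e X)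
      (Module.End.trace_aeval_mul_eq_zero_of_commutator_eq_aeval he) (by rwa [AlgEquiv.spectrum_eq])
  refine ⟨?_, heval⟩
  have hnil := Module.End.isNilpotent_aeval_of_forall_mem_spectrum (e X) (p := p)
    (by rwa [AlgEquiv.spectrum_eq])
  rw [aeval_algEquiv, AlgHom.comp_apply] at hnil
  exact h ▸ (IsNilpotent.map_iff e.injective).mp hnil

theorem stmt2 (n : ℕ) (hn : 1 ≤ n) (A X : Matrix (Fin n) (Fin n) ℂ)
    (p : Polynomial ℂ) (h : X * A - A * X = Polynomial.aeval X p) :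
    IsNilpotent (X * A - A * X) ∧
      ∀ μ ∈ spectrum ℂ X, Polynomial.eval μ p = 0 :=
  stmt2_general n A X p h
end

section
/- Let n ≥ 2, let A be an upper triangular n×n complex matrix (A i j = 0 for j < i) with first diagonal entry A₀₀ = μ and last diagonal entry A_{n−1,n−1} = λ. Let p be a polynomial with complex coefficients and α ∈ ℂ with p(α) = 0 and λ − μ = p′(α). Then X = α·I_n + E, where E is the matrix whose only nonzero entry is a 1 in position (0, n−1), satisfies XA − AX = p(X). -/
/-!
Since `E ^ 2 = 0`, Taylor expansion at `α` gives `p(α • 1 + E) = p(α) • 1 + p'(α) • E = (λ - μ) • E`.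
On the other side `α • 1` is central, and for upper triangular `A` the commutator `E A - A E`
only sees the corner entries `A (n-1) (n-1)` and `A 0 0`, so it equals `(λ - μ) • E` as well.
-/

open Polynomial

open scoped IsMulCommutative in
theorem aeval_algebraMap_add_of_sq_eq_zero {R A : Type*} [CommRing R] [Ring A] [Algebra R A]
    (p : R[X]) (r : R) {e : A} (he : e ^ 2 = 0) :
    aeval (algebraMap R A r + e) p = algebraMap R A (p.eval r) + p.derivative.eval r • e := by
  have := Algebra.isMulCommutative_adjoin R (s := {e}) (by simp)
  let e' : Algebra.adjoin R {e} := ⟨e, Algebra.self_mem_adjoin_singleton R e⟩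
  have := congrArg Subtype.val (aeval_add_of_sq_eq_zero p (algebraMap R _ r) e' (Subtype.ext he))
  rwa [aeval_subalgebra_coe, aeval_algebraMap_apply_eq_algebraMap_eval,
    aeval_algebraMap_apply_eq_algebraMap_eval, ← Algebra.smul_def] at this

theorem Matrix.single_one_mul_sub_mul_single_one {n R : Type*} [Fintype n] [DecidableEq n]
    [Ring R] (A : Matrix n n R) (i j : n) (hrow : ∀ k ≠ j, A j k = 0)
    (hcol : ∀ k ≠ i, A k i = 0) :
    single i j 1 * A - A * single i j 1 = single i j (A j j - A i i) := by
  ext a b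
  rcases eq_or_ne a i with rfl | ha
  · rcases eq_or_ne b j with rfl | hb
    · simp
    · simp [mul_single_apply_of_ne (hbj := hb), hrow b hb, hb.symm]
  · rcases eq_or_ne b j with rfl | hb
    · simp [single_mul_apply_of_ne (h := ha), hcol a ha, ha.symm]
    · simp [single_mul_apply_of_ne (h := ha), mul_single_apply_of_ne (hbj := hb), ha.symm]

theorem stmt5 (n : ℕ) (hn : 2 ≤ n) (A : Matrix (Fin n) (Fin n) ℂ)
    (hA : ∀ i j : Fin n, j < i → A i j = 0)
    (μ lam : ℂ)
    (hμ : A ⟨0, by omega⟩ ⟨0, by omega⟩ = μ)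
    (hlam : A ⟨n - 1, by omega⟩ ⟨n - 1, by omega⟩ = lam)
    (p : Polynomial ℂ) (α : ℂ) (hpα : Polynomial.eval α p = 0)
    (hd : lam - μ = Polynomial.eval α (Polynomial.derivative p))
    (E : Matrix (Fin n) (Fin n) ℂ)
    (hE : E = Matrix.single ⟨0, by omega⟩ ⟨n - 1, by omega⟩ 1)
    (X : Matrix (Fin n) (Fin n) ℂ)
    (hX : X = α • (1 : Matrix (Fin n) (Fin n) ℂ) + E) :
    X * A - A * X = Polynomial.aeval X p := by
  set first : Fin n := ⟨0, by omega⟩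
  set last : Fin n := ⟨n - 1, by omega⟩
  rw [← Algebra.algebraMap_eq_smul_one] at hX
  have hE2 : E ^ 2 = 0 := by
    rw [sq, hE, Matrix.single_mul_single_of_ne _ _ _ _ (by simp [first, last, Fin.ext_iff]; omega)]
  have hrow : ∀ k ≠ last, A last k = 0 := fun k hk =>
    hA _ _ (Fin.lt_def.2 (by have := Fin.val_ne_of_ne hk; have := k.isLt; dsimp [last] at *; omega))
  have hcol : ∀ k ≠ first, A k first = 0 := fun k hk =>
    hA _ _ (Fin.lt_def.2 (by have := Fin.val_ne_of_ne hk; dsimp [first] at *; omega))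
  have hcomm : X * A - A * X = (lam - μ) • E := by
    rw [hX, add_mul, mul_add, Algebra.commutes, add_sub_add_left_eq_sub, hE,
      Matrix.single_one_mul_sub_mul_single_one A _ _ hrow hcol, hμ, hlam, Matrix.smul_single,
      smul_eq_mul, mul_one]
  have heval : aeval X p = (lam - μ) • E := by
    rw [hX, aeval_algebraMap_add_of_sq_eq_zero _ _ hE2, hpα, hd, map_zero, zero_add]
  rw [hcomm, heval]
end

section
/- Let n ≥ 1, let p ≥ 2 be an integer, let g be a polynomial with complex coefficients and let A, X be n×n complex matrices such that XA − AX = X^p · g(X). Then for all integers s, l ≥ 1 there exist polynomials h_0, h_1, …, h_s with complex coefficients such that A^s X^l = Σ_{j=0}^{s} h_j(X) · A^{s−j}, and for every j the polynomial h_j is divisible by x^{l + j(p−1)}. -/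
open Polynomial Finset

theorem stmt6 (n : ℕ) (hn : 1 ≤ n) (p : ℕ) (hp : 2 ≤ p) (g : Polynomial ℂ)
    (A X : Matrix (Fin n) (Fin n) ℂ)
    (h : X * A - A * X = X ^ p * Polynomial.aeval X g)
    (s l : ℕ) (hs : 1 ≤ s) (hl : 1 ≤ l) :
    ∃ hpoly : ℕ → Polynomial ℂ,
      A ^ s * X ^ l =
        ∑ j ∈ Finset.range (s + 1), Polynomial.aeval X (hpoly j) * A ^ (s - j) ∧
      ∀ j ≤ s, (Polynomial.X : Polynomial ℂ) ^ (l + j * (p - 1)) ∣ hpoly j := by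
  classical
  set c : Polynomial ℂ := -(Polynomial.X ^ p * g) with hc
  have hAX : A * X = X * A + aeval X c := by
    have h1 : A * X = X * A - (X * A - A * X) := by abel
    rw [h1, h]
    simp [hc, map_neg, map_mul, map_pow, aeval_X, sub_eq_add_neg]
  -- derivative lemma for divisibility
  have deriv_dvd : ∀ (m : ℕ) (f : Polynomial ℂ), 1 ≤ m →
      (Polynomial.X : Polynomial ℂ) ^ m ∣ f →
      (Polynomial.X : Polynomial ℂ) ^ (m - 1) ∣ derivative f := by
    rintro m f hm ⟨q, rfl⟩
    rw [derivative_mul, derivative_X_pow]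
    refine dvd_add ?_ ?_
    · exact Dvd.dvd.mul_right (Dvd.dvd.mul_left (dvd_refl _) _) q
    · exact Dvd.dvd.mul_right (pow_dvd_pow _ (Nat.sub_le m 1)) _
  -- key commutation lemma
  have key : ∀ f : Polynomial ℂ,
      A * aeval X f = aeval X f * A + aeval X (c * derivative f) := by
    intro f
    induction f using Polynomial.induction_on with
    | C a =>
      simp [aeval_C, derivative_C, mul_zero, map_zero, add_zero, Algebra.commutes]
    | add q r hq hr =>
      simp only [derivative_add, mul_add, map_add, hq, hr, add_mul]
      abel
    | monomial k a ih =>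
      have e1 : (C a : Polynomial ℂ) * Polynomial.X ^ (k + 1)
          = (C a * Polynomial.X ^ k) * Polynomial.X := by ring
      rw [e1]
      set f := (C a : Polynomial ℂ) * Polynomial.X ^ k with hf
      have e2 : aeval X (f * Polynomial.X) = aeval X f * X := by
        rw [map_mul, aeval_X]
      calc A * aeval X (f * Polynomial.X)
          = (A * aeval X f) * X := by rw [e2, mul_assoc]
        _ = (aeval X f * A + aeval X (c * derivative f)) * X := by rw [ih]
        _ = aeval X f * (A * X) + aeval X (c * derivative f) * X := by
            rw [add_mul, mul_assoc]
        _ = aeval X f * (X * A) + aeval X f * aeval X c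
              + aeval X (c * derivative f) * X := by
            rw [hAX, mul_add]
        _ = aeval X (f * Polynomial.X) * A
              + aeval X (c * derivative (f * Polynomial.X)) := by
            have e8 : aeval X (c * derivative f) * X
                = aeval X (c * derivative f * Polynomial.X) := by
              rw [map_mul (aeval X) (c * derivative f) Polynomial.X, aeval_X]
            have e9 : aeval X f * aeval X c + aeval X (c * derivative f) * X
                = aeval X (c * derivative (f * Polynomial.X)) := by
              rw [← map_mul, e8, ← map_add]
              congr 1
              simp only [hf, derivative_mul, derivative_X, derivative_C, zero_mul,
                zero_add, mul_one]
              ring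
            rw [add_assoc, e9, ← mul_assoc, ← e2]
  -- main induction
  have main : ∀ t : ℕ, ∃ hp : ℕ → Polynomial ℂ,
      (A ^ t * X ^ l = ∑ j ∈ Finset.range (t + 1), aeval X (hp j) * A ^ (t - j)) ∧
      (∀ j ≤ t, (Polynomial.X : Polynomial ℂ) ^ (l + j * (p - 1)) ∣ hp j) ∧
      (∀ j, t < j → hp j = 0) := by
    intro t
    induction t with
    | zero =>
      refine ⟨fun j => if j = 0 then Polynomial.X ^ l else 0, ?_, ?_, ?_⟩
      · simp [map_pow]
      · intro j hj
        interval_cases j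
        simp
      · intro j hj
        simp [Nat.pos_iff_ne_zero.mp hj]
    | succ t ih =>
      obtain ⟨hpf, ih1, ih2, ih3⟩ := ih
      refine ⟨fun j => match j with
        | 0 => hpf 0
        | Nat.succ k => hpf (k + 1) + c * derivative (hpf k), ?_, ?_, ?_⟩
      · have step : A ^ (t + 1) * X ^ l
            = ∑ j ∈ Finset.range (t + 1),
                (aeval X (hpf j) * A ^ (t + 1 - j)
                  + aeval X (c * derivative (hpf j)) * A ^ (t - j)) := by
          rw [pow_succ', mul_assoc, ih1, Finset.mul_sum]
          refine Finset.sum_congr rfl ?_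
          intro j hj
          rw [Finset.mem_range] at hj
          have hjt : j ≤ t := Nat.lt_succ_iff.mp hj
          have e3 : t + 1 - j = (t - j) + 1 := by omega
          rw [← mul_assoc, key (hpf j), add_mul, e3, pow_succ', mul_assoc]
        rw [step, Finset.sum_add_distrib]
        rw [Finset.sum_range_succ' (fun j => aeval X
          (match j with
            | 0 => hpf 0
            | Nat.succ k => hpf (k + 1) + c * derivative (hpf k)) * A ^ (t + 1 - j)) (t + 1)]
        have e4 : ∀ j ∈ Finset.range (t + 1),
            aeval X (hpf (j + 1) + c * derivative (hpf j)) * A ^ (t + 1 - (j + 1))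
            = aeval X (hpf (j + 1)) * A ^ (t - j)
              + aeval X (c * derivative (hpf j)) * A ^ (t - j) := by
          intro j hj
          have : t + 1 - (j + 1) = t - j := by omega
          rw [this, map_add, add_mul]
        rw [Finset.sum_congr rfl e4, Finset.sum_add_distrib]
        have e5 : ∑ j ∈ Finset.range (t + 1), aeval X (hpf j) * A ^ (t + 1 - j)
            = ∑ j ∈ Finset.range (t + 1), aeval X (hpf (j + 1)) * A ^ (t - j)
              + aeval X (hpf 0) * A ^ (t + 1) := by
          rw [Finset.sum_range_succ' (fun j => aeval X (hpf j) * A ^ (t + 1 - j)) t]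
          rw [Finset.sum_range_succ (fun j => aeval X (hpf (j + 1)) * A ^ (t - j)) t]
          rw [ih3 (t + 1) (by omega)]
          simp only [map_zero, zero_mul, add_zero, Nat.sub_zero]
          refine congrArg₂ _ (Finset.sum_congr rfl ?_) rfl
          intro j hj
          rw [Finset.mem_range] at hj
          have : t + 1 - (j + 1) = t - j := by omega
          rw [this]
        rw [e5]
        simp only [Nat.sub_zero]
        abel
      · intro j hj
        match j with
        | 0 => simpa using ih2 0 (Nat.zero_le t)
        | Nat.succ k =>
          have hk : k ≤ t := by omega
          refine dvd_add ?_ ?_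
          · by_cases hks : k + 1 ≤ t
            · exact ih2 (k + 1) hks
            · have : hpf (k + 1) = 0 := ih3 (k + 1) (by omega)
              rw [this]
              exact dvd_zero _
          · have hd := ih2 k hk
            have hm1 : 1 ≤ l + k * (p - 1) := by omega
            have hd2 := deriv_dvd _ _ hm1 hd
            have e6 : l + (k + 1) * (p - 1) = p + (l + k * (p - 1) - 1) := by
              have : (k + 1) * (p - 1) = k * (p - 1) + (p - 1) := by ring
              omega
            rw [e6, hc, neg_mul, dvd_neg, pow_add, mul_assoc]
            exact mul_dvd_mul_left _ (Dvd.dvd.mul_left hd2 g)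
      · intro j hj
        match j with
        | Nat.succ k =>
          have h1 : hpf (k + 1) = 0 := ih3 (k + 1) (by omega)
          have h2 : hpf k = 0 := ih3 k (by omega)
          simp [h1, h2]
  obtain ⟨hpf, h1, h2, _⟩ := main s
  exact ⟨hpf, h1, h2⟩
end

section
/- Let n ≥ 1, let p ≥ 2 be an integer, let g be a polynomial with complex coefficients, and let A, X be n×n complex matrices such that XA − AX = X^p · g(X) and X is nilpotent. Let v ∈ ℂⁿ and m ≥ 1 with A^m v = 0, and let r, k be integers with r ≥ n, k ≥ 1 and k(p−1) < r. Then for every integer t with t ≥ r − k(p−1), one has A^{m+k−1} X^t v = 0. -/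
open Polynomial in
theorem stmt7_aux (n : ℕ) (hn : 1 ≤ n) (p : ℕ) (hp : 2 ≤ p) (g : Polynomial ℂ)
    (A X : Matrix (Fin n) (Fin n) ℂ)
    (h : X * A - A * X = X ^ p * Polynomial.aeval X g) (hX : IsNilpotent X)
    (v : Fin n → ℂ) (m : ℕ) (hm : 1 ≤ m) (hv : (A ^ m).mulVec v = 0)
    (r k : ℕ) (hr : n ≤ r) (hk : 1 ≤ k) (hkr : k * (p - 1) < r)
    (t : ℕ) (ht : r - k * (p - 1) ≤ t) :
    (A ^ (m + k - 1) * X ^ t).mulVec v = 0 := by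
  -- X ^ r = 0
  have hXn : X ^ n = 0 := by
    have h1 := Matrix.isNilpotent_charpoly_sub_pow_of_isNilpotent hX
    have h2 : X.charpoly = Polynomial.X ^ (Fintype.card (Fin n)) := by
      rw [← sub_eq_zero]; exact h1.eq_zero
    have h3 := X.aeval_self_charpoly
    rw [h2] at h3
    simpa using h3
  have hXr : ∀ s : ℕ, r ≤ s → X ^ s = 0 := by
    intro s hs
    have : X ^ s = X ^ n * X ^ (s - n) := by
      rw [← pow_add]
      congr 1
      omega
    rw [this, hXn, zero_mul]
  -- commutation basics
  have hc : Commute X (aeval X g) := by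
    have := congrArg (aeval X) (mul_comm Polynomial.X g)
    simpa [Commute, SemiconjBy] using this
  have hcp : ∀ i : ℕ, aeval X g * X ^ i = X ^ i * aeval X g := fun i =>
    (hc.pow_left i).symm.eq
  have hXA : X * A = A * X + X ^ p * aeval X g := by
    rw [← sub_eq_iff_eq_add']; exact h
  have pow_comm : ∀ j : ℕ, X ^ (j+1) * A
      = A * X ^ (j+1) + (j+1) • (X ^ (p + j) * aeval X g) := by
    intro j
    induction j with
    | zero => simpa using hXA
    | succ j ih =>
      have e : X ^ (j+1+1) * A = X * (X ^ (j+1) * A) := by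
        rw [← mul_assoc, ← pow_succ']
      rw [e, ih, mul_add, mul_smul_comm]
      have e2 : X * (A * X ^ (j+1)) = A * X ^ (j+1+1) + X ^ (p+(j+1)) * aeval X g := by
        rw [← mul_assoc, hXA, add_mul, mul_assoc (X ^ p) (aeval X g) (X ^ (j+1)), hcp,
          ← mul_assoc (X ^ p), ← pow_add, mul_assoc, ← pow_succ']
      have e3 : X * (X ^ (p+j) * aeval X g) = X ^ (p+(j+1)) * aeval X g := by
        rw [← mul_assoc, ← pow_succ']
        ring_nf
      rw [e2, e3, add_assoc]
      congr 1
      rw [succ_nsmul, succ_nsmul, succ_nsmul]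
      abel
  -- the "derivative" operation
  set δ : Polynomial ℂ → Polynomial ℂ :=
    fun F => Polynomial.X ^ p * g * derivative F with hδ
  have comm : ∀ F : Polynomial ℂ, aeval X F * A = A * aeval X F + aeval X (δ F) := by
    intro F
    induction F using Polynomial.induction_on' with
    | add F G ihF ihG =>
      simp only [hδ, map_add, derivative_add, mul_add, add_mul]
      rw [ihF, ihG]
      simp only [hδ]
      abel
    | monomial j a =>
      cases j with
      | zero =>
        simp [hδ, aeval_monomial, Algebra.commutes]
      | succ j =>
        have hd : derivative (monomial (j+1) a) = monomial j (a * ((j+1 : ℕ) : ℂ)) := by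
          simp [derivative_monomial]
        have edelta : aeval X (Polynomial.X ^ p * g * monomial j (a * ((j+1 : ℕ) : ℂ)))
            = (a * ((j+1 : ℕ) : ℂ)) • (X ^ (p+j) * aeval X g) := by
          rw [map_mul, map_mul, aeval_X_pow, aeval_monomial, ← Algebra.smul_def,
            mul_smul_comm, mul_assoc, hcp, ← mul_assoc, ← pow_add]
        simp only [hδ]
        rw [hd, edelta, aeval_monomial, ← Algebra.smul_def, smul_mul_assoc, pow_comm j,
          mul_smul_comm, smul_add]
        congr 1
        rw [mul_smul, Nat.cast_smul_eq_nsmul]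
  have hA' : ∀ F : Polynomial ℂ,
      A * aeval X F = aeval X F * A - aeval X (δ F) := by
    intro F
    rw [eq_sub_iff_add_eq]
    exact (comm F).symm
  -- divisibility
  have step : ∀ (a b : ℕ) (F : Polynomial ℂ),
      A ^ (a+1) * aeval X F * A ^ b
        = A ^ a * aeval X F * A ^ (b+1) - A ^ a * aeval X (δ F) * A ^ b := by
    intro a b F
    have hAA : A * A ^ b = A ^ b * A := by rw [← pow_succ', pow_succ]
    rw [pow_succ, mul_assoc (A ^ a) A _, hA' F, pow_succ, ← hAA]
    noncomm_ring
  have hdvd : ∀ (F : Polynomial ℂ) (s : ℕ), Polynomial.X ^ s ∣ F →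
      Polynomial.X ^ (s + (p-1)) ∣ δ F := by
    intro F s hF
    obtain ⟨F₁, rfl⟩ := hF
    rw [hδ]
    simp only [derivative_mul, derivative_X_pow, mul_add]
    apply dvd_add
    · rcases Nat.eq_zero_or_pos s with hs | hs
      · subst hs; simp
      · have h1 : (Polynomial.X : Polynomial ℂ) ^ (s + (p-1)) ∣ Polynomial.X ^ p * Polynomial.X ^ (s-1) := by
          rw [← pow_add]
          apply pow_dvd_pow
          omega
        exact h1.trans ⟨g * Polynomial.C (s : ℂ) * F₁, by ring⟩
    · have h1 : (Polynomial.X : Polynomial ℂ) ^ (s + (p-1)) ∣ Polynomial.X ^ p * Polynomial.X ^ s := by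
        rw [← pow_add]
        apply pow_dvd_pow
        omega
      exact h1.trans ⟨g * derivative F₁, by ring⟩
  have hzero : ∀ (F : Polynomial ℂ) (s : ℕ), Polynomial.X ^ s ∣ F → r ≤ s →
      aeval X F = 0 := by
    intro F s hF hs
    obtain ⟨F₁, rfl⟩ := hF
    rw [map_mul, aeval_X_pow, hXr s hs, zero_mul]
  -- main induction
  have main : ∀ l : ℕ, ∀ F : Polynomial ℂ, ∀ s : ℕ, Polynomial.X ^ s ∣ F →
      r ≤ s + (l+1) * (p-1) → ∀ j : ℕ, j ≤ m →
      (A ^ (j + l) * aeval X F * A ^ (m - j)).mulVec v = 0 := by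
    intro l
    induction l with
    | zero =>
      intro F s hFd hineq j
      induction j with
      | zero =>
        intro _
        simp only [Nat.zero_add, Nat.add_zero, pow_zero, one_mul, Nat.sub_zero]
        rw [← Matrix.mulVec_mulVec, hv, Matrix.mulVec_zero]
      | succ j IHj =>
        intro hj
        have hδF : aeval X (δ F) = 0 := by
          apply hzero (δ F) (s + (p-1)) (hdvd F s hFd)
          omega
        rw [show j+1+0 = (j+0)+1 from by omega, step (j+0) (m-(j+1)) F, hδF,
          mul_zero, zero_mul, sub_zero, show m-(j+1)+1 = m-j from by omega]
        exact IHj (by omega)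
    | succ l IHl =>
      intro F s hFd hineq j
      induction j with
      | zero =>
        intro _
        simp only [Nat.zero_add, pow_zero, one_mul, Nat.sub_zero]
        rw [← Matrix.mulVec_mulVec, hv, Matrix.mulVec_zero]
      | succ j IHj =>
        intro hj
        rw [show j+1+(l+1) = (j+(l+1))+1 from by omega, step (j+(l+1)) (m-(j+1)) F,
          Matrix.sub_mulVec, show m-(j+1)+1 = m-j from by omega]
        rw [IHj (by omega)]
        have h2 := IHl (δ F) (s + (p-1)) (hdvd F s hFd)
          (by have e : (l+1+1) * (p-1) = (l+1) * (p-1) + (p-1) := by ring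
              omega) (j+1) hj
        rw [show j+(l+1) = (j+1)+l from by omega, h2, sub_zero]
  -- conclude
  have hfin := main (k-1) (Polynomial.X ^ t) t dvd_rfl
    (by have e : (k-1+1) * (p-1) = k * (p-1) := by congr 1; omega
        rw [e]; omega) m le_rfl
  rw [aeval_X_pow, Nat.sub_self, pow_zero, mul_one] at hfin
  rw [show m + k - 1 = m + (k-1) from by omega]
  exact hfin

theorem stmt7 (n : ℕ) (hn : 1 ≤ n) (p : ℕ) (hp : 2 ≤ p) (g : Polynomial ℂ)
    (A X : Matrix (Fin n) (Fin n) ℂ)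
    (h : X * A - A * X = X ^ p * Polynomial.aeval X g) (hX : IsNilpotent X)
    (v : Fin n → ℂ) (m : ℕ) (hm : 1 ≤ m) (hv : (A ^ m).mulVec v = 0)
    (r k : ℕ) (hr : n ≤ r) (hk : 1 ≤ k) (hkr : k * (p - 1) < r)
    (t : ℕ) (ht : r - k * (p - 1) ≤ t) :
    (A ^ (m + k - 1) * X ^ t).mulVec v = 0 :=
  stmt7_aux n hn p hp g A X h hX v m hm hv r k hr hk hkr t ht
end

section
/- Let n ≥ 1, let p be an integer with 2 ≤ p ≤ n−1, let g be a polynomial with complex coefficients with g(0) ≠ 0 and deg(g) < n − p, and let A, X be n×n complex matrices such that XA − AX = X^p · g(X) and X is nilpotent. Then for every λ ∈ ℂ the generalized eigenspace ker((A − λ·I_n)^n) is invariant under X: if (A − λ·I_n)^n v = 0 for v ∈ ℂⁿ, then (A − λ·I_n)^n (X v) = 0. -/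
open Polynomial

theorem stmt8 (n : ℕ) (hn : 1 ≤ n) (p : ℕ) (hp2 : 2 ≤ p) (hpn : p ≤ n - 1)
    (g : Polynomial ℂ) (hg0 : Polynomial.eval 0 g ≠ 0) (hgdeg : g.natDegree < n - p)
    (A X : Matrix (Fin n) (Fin n) ℂ)
    (h : X * A - A * X = X ^ p * Polynomial.aeval X g) (hX : IsNilpotent X)
    (lam : ℂ) (v : Fin n → ℂ)
    (hv : ((A - lam • (1 : Matrix (Fin n) (Fin n) ℂ)) ^ n).mulVec v = 0) :
    ((A - lam • (1 : Matrix (Fin n) (Fin n) ℂ)) ^ n).mulVec (X.mulVec v) = 0 := by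
  obtain ⟨s, rfl⟩ : ∃ s, p = s + 2 := ⟨p - 2, by omega⟩
  set B := A - lam • (1 : Matrix (Fin n) (Fin n) ℂ) with hB
  set e : Polynomial ℂ := Polynomial.X ^ (s + 2) * g with he
  -- X ^ n = 0
  have hXn : X ^ n = 0 := by
    have h1 := Matrix.isNilpotent_charpoly_sub_pow_of_isNilpotent hX
    have h2 : X.charpoly - Polynomial.X ^ (Fintype.card (Fin n)) = 0 := h1.eq_zero
    have h2' : X.charpoly = Polynomial.X ^ n := by
      have := sub_eq_zero.mp h2
      simpa using this
    have h3 := X.aeval_self_charpoly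
    rw [h2'] at h3
    simpa using h3
  -- basic commutation
  have hcomm : B * X = X * B - Polynomial.aeval X e := by
    have hXe : X * A - A * X = Polynomial.aeval X e := by
      rw [he, map_mul, aeval_X_pow]; exact h
    rw [hB]
    have e1 : (A - lam • 1) * X = A * X - lam • X := by
      rw [sub_mul, smul_mul_assoc, one_mul]
    have e2 : X * (A - lam • 1) = X * A - lam • X := by
      rw [mul_sub, mul_smul_comm, mul_one]
    rw [e1, e2, ← hXe]
    abel
  -- derivation formula
  have hder : ∀ f : Polynomial ℂ,
      B * Polynomial.aeval X f = Polynomial.aeval X f * B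
        - Polynomial.aeval X (Polynomial.derivative f * e) := by
    intro f
    induction f using Polynomial.induction_on with
    | C a =>
        rw [aeval_C, derivative_C, zero_mul, map_zero, sub_zero]
        exact (Algebra.commutes a B).symm
    | add f1 f2 ih1 ih2 =>
        rw [map_add, mul_add, add_mul, ih1, ih2, derivative_add, add_mul, map_add]
        abel
    | monomial k a ih =>
        set u := Polynomial.aeval X (Polynomial.C a * Polynomial.X ^ k) with hu
        set d := Polynomial.aeval X
          (Polynomial.derivative (Polynomial.C a * Polynomial.X ^ k) * e) with hd0
        have ha1 : Polynomial.aeval X (Polynomial.C a * Polynomial.X ^ (k + 1)) = u * X := by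
          rw [show Polynomial.C a * Polynomial.X ^ (k + 1)
              = (Polynomial.C a * Polynomial.X ^ k) * Polynomial.X by ring,
            map_mul, aeval_X, hu]
        have hd : Polynomial.derivative (Polynomial.C a * Polynomial.X ^ (k + 1))
            = Polynomial.derivative (Polynomial.C a * Polynomial.X ^ k) * Polynomial.X
              + Polynomial.C a * Polynomial.X ^ k := by
          rw [show Polynomial.C a * Polynomial.X ^ (k + 1)
              = (Polynomial.C a * Polynomial.X ^ k) * Polynomial.X by ring,
            derivative_mul, derivative_X, mul_one]
        have h3 : Polynomial.aeval X (Polynomial.derivative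
              (Polynomial.C a * Polynomial.X ^ (k + 1)) * e)
            = d * X + u * Polynomial.aeval X e := by
          rw [hd, add_mul, map_add]
          congr 1
          · rw [show Polynomial.derivative (Polynomial.C a * Polynomial.X ^ k)
                * Polynomial.X * e
                = (Polynomial.derivative (Polynomial.C a * Polynomial.X ^ k) * e)
                  * Polynomial.X by ring, map_mul, aeval_X, hd0]
          · rw [map_mul, hu]
        rw [ha1, h3, ← mul_assoc, ih, sub_mul, mul_assoc, hcomm, mul_sub, ← mul_assoc]
        abel
  -- key recursion
  have key : ∀ N k m (w : Fin n → ℂ) (q : Polynomial ℂ), m + (n - k) ≤ N →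
      (B ^ m).mulVec w = 0 →
      (B ^ (m + (n - k))).mulVec
        ((Polynomial.aeval X (Polynomial.X ^ (k + 1) * q)).mulVec w) = 0 := by
    intro N
    induction N with
    | zero =>
        intro k m w q hle hw
        have hk : n ≤ k := by omega
        have hzero : Polynomial.aeval X (Polynomial.X ^ (k + 1) * q) = 0 := by
          rw [map_mul, aeval_X_pow]
          have hx : X ^ (k + 1) = X ^ n * X ^ (k + 1 - n) := by
            rw [← pow_add]; congr 1; omega
          rw [hx, hXn, zero_mul, zero_mul]
        rw [hzero, Matrix.zero_mulVec, Matrix.mulVec_zero]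
    | succ N ih =>
        intro k m w q hle hw
        by_cases hk : n ≤ k
        · have hzero : Polynomial.aeval X (Polynomial.X ^ (k + 1) * q) = 0 := by
            rw [map_mul, aeval_X_pow]
            have hx : X ^ (k + 1) = X ^ n * X ^ (k + 1 - n) := by
              rw [← pow_add]; congr 1; omega
            rw [hx, hXn, zero_mul, zero_mul]
          rw [hzero, Matrix.zero_mulVec, Matrix.mulVec_zero]
        · push_neg at hk
          rcases Nat.eq_zero_or_pos m with hm | hm
          · subst hm
            have hw0 : w = 0 := by simpa using hw
            subst hw0
            rw [Matrix.mulVec_zero, Matrix.mulVec_zero]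
          · -- m ≥ 1, k < n
            have hexp : m + (n - k) = (m + (n - k) - 1) + 1 := by omega
            have hstep : B.mulVec ((Polynomial.aeval X
                (Polynomial.X ^ (k + 1) * q)).mulVec w)
                = ((B * Polynomial.aeval X (Polynomial.X ^ (k + 1) * q))).mulVec w :=
              Matrix.mulVec_mulVec _ _ _
            rw [hexp, pow_succ, ← Matrix.mulVec_mulVec, hstep,
              hder (Polynomial.X ^ (k + 1) * q)]
            set r : Polynomial ℂ :=
              (Polynomial.C ((k + 1 : ℕ) : ℂ) * q * Polynomial.X ^ s
                + Polynomial.X ^ (s + 1) * Polynomial.derivative q) * g with hr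
            have hdiv : Polynomial.derivative (Polynomial.X ^ (k + 1) * q) * e
                = Polynomial.X ^ (k + 1 + 1) * r := by
              rw [he, hr, derivative_mul, derivative_X_pow]
              simp only [Nat.add_sub_cancel]
              ring
            rw [hdiv, Matrix.sub_mulVec, Matrix.mulVec_sub]
            have hterm1 : (B ^ (m + (n - k) - 1)).mulVec
                ((Polynomial.aeval X (Polynomial.X ^ (k + 1) * q) * B).mulVec w) = 0 := by
              rw [← Matrix.mulVec_mulVec]
              have h1 : m + (n - k) - 1 = (m - 1) + (n - k) := by omega
              rw [h1]
              apply ih k (m - 1) (B.mulVec w) q (by omega)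
              rw [Matrix.mulVec_mulVec, ← pow_succ]
              have h2 : m - 1 + 1 = m := by omega
              rw [h2]; exact hw
            have hterm2 : (B ^ (m + (n - k) - 1)).mulVec
                ((Polynomial.aeval X (Polynomial.X ^ (k + 1 + 1) * r)).mulVec w) = 0 := by
              have h1 : m + (n - k) - 1 = m + (n - (k + 1)) := by omega
              rw [h1]
              exact ih (k + 1) m w r (by omega) hw
            rw [hterm1, hterm2, sub_zero]
  -- apply the recursion with k = 0, m = n, q = 1
  have h2n : (B ^ (n + n)).mulVec (X.mulVec v) = 0 := by
    have := key (n + n) 0 n v 1 (by omega) hv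
    simpa using this
  -- kernel stabilization
  set f : (Fin n → ℂ) →ₗ[ℂ] (Fin n → ℂ) := Matrix.toLinAlgEquiv' B with hf
  have hfr : Module.finrank ℂ (Fin n → ℂ) = n := Module.finrank_fin_fun ℂ
  have hker := Module.End.ker_pow_eq_ker_pow_finrank_of_le
    (K := ℂ) (V := Fin n → ℂ) (f := f) (m := n + n) (by omega)
  have hmem : X.mulVec v ∈ LinearMap.ker (f ^ (n + n)) := by
    rw [LinearMap.mem_ker, hf, ← map_pow, Matrix.toLinAlgEquiv'_apply]
    exact h2n
  rw [hker, hfr] at hmem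
  have hfin := LinearMap.mem_ker.mp hmem
  rw [hf, ← map_pow, Matrix.toLinAlgEquiv'_apply] at hfin
  exact hfin
end

section
/- Let n ≥ 1, let p be an integer with 2 ≤ p ≤ n−1, let g be a polynomial with complex coefficients with g(0) ≠ 0 and deg(g) < n − p, and let J_n be the n×n nilpotent Jordan block. If X is a nilpotent n×n complex matrix with X J_n − J_n X = X^p · g(X), then X e₁ = 0, where e₁ is the first standard basis vector of ℂⁿ; equivalently, the first column of X is zero. -/
open Polynomial Matrix

-- coordinate formula for J action
theorem auxJ {n : ℕ} (J : Matrix (Fin n) (Fin n) ℂ)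
    (hJ : ∀ i j : Fin n, J i j = if (i : ℕ) + 1 = (j : ℕ) then 1 else 0)
    (y : Fin n → ℂ) (i : Fin n) :
    J.mulVec y i = if hh : (i : ℕ) + 1 < n then y ⟨(i : ℕ) + 1, hh⟩ else 0 := by
  rw [Matrix.mulVec, dotProduct]
  split
  · next hh =>
    rw [Finset.sum_eq_single (⟨(i:ℕ)+1, hh⟩ : Fin n)]
    · rw [hJ]; simp
    · intro b _ hb
      rw [hJ]
      have : ¬ ((i:ℕ)+1 = (b:ℕ)) := fun hc => hb (Fin.ext hc.symm)
      simp [this]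
    · simp
  · next hh =>
    apply Finset.sum_eq_zero
    intro b _
    rw [hJ]
    have : ¬ ((i:ℕ)+1 = (b:ℕ)) := by have := b.isLt; omega
    simp [this]

theorem auxJpow {n : ℕ} (J : Matrix (Fin n) (Fin n) ℂ)
    (hJ : ∀ i j : Fin n, J i j = if (i : ℕ) + 1 = (j : ℕ) then 1 else 0)
    (m : ℕ) (y : Fin n → ℂ) (i : Fin n) (hh : (i : ℕ) + m < n) :
    (J ^ m).mulVec y i = y ⟨(i : ℕ) + m, hh⟩ := by
  induction m generalizing i with
  | zero => simp
  | succ m ih =>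
    rw [pow_succ', ← Matrix.mulVec_mulVec, auxJ J hJ]
    have h1 : (i:ℕ) + 1 < n := by omega
    rw [dif_pos h1, ih ⟨(i:ℕ)+1, h1⟩ (by simpa using by omega : ((⟨(i:ℕ)+1,h1⟩ : Fin n) : ℕ) + m < n)]
    congr 1
    ext
    simp; omega

theorem auxCommute {n : ℕ} (X : Matrix (Fin n) (Fin n) ℂ) (f : Polynomial ℂ) :
    Commute X (Polynomial.aeval X f) := by
  induction f using Polynomial.induction_on' with
  | add a b ha hb => rw [map_add]; exact ha.add_right hb
  | monomial k a =>
    rw [Polynomial.aeval_monomial]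
    exact (Algebra.commute_algebraMap_right a X).mul_right ((Commute.refl X).pow_right k)

-- commutator with powers
theorem auxComm {n : ℕ} (p : ℕ) (X J G : Matrix (Fin n) (Fin n) ℂ)
    (hGX : Commute X G)
    (h : X * J - J * X = X ^ p * G) (k : ℕ) :
    J * X ^ (k + 1) = X ^ (k + 1) * J - ((k : ℂ) + 1) • (X ^ (k + p) * G) := by
  have hJX : J * X = X * J - X ^ p * G := by rw [← h]; noncomm_ring
  induction k with
  | zero => simpa using hJX
  | succ k ih =>
    have : J * X ^ (k + 1 + 1) = (J * X ^ (k + 1)) * X := by rw [pow_succ, ← mul_assoc]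
    rw [this, ih, sub_mul, smul_mul_assoc, mul_assoc (X ^ (k+1)) J X, hJX,
      mul_assoc (X ^ (k+p)) G X, ← hGX.eq, ← mul_assoc (X ^ (k+p)) X G, ← pow_succ]
    rw [mul_sub, ← mul_assoc, ← pow_succ]
    have h2 : X ^ (k + 1) * (X ^ p * G) = X ^ (k + 1 + p) * G := by
      rw [← mul_assoc, ← pow_add]
    have h3 : (k : ℕ) + p + 1 = k + 1 + p := by omega
    rw [h2, h3]
    push_cast
    module

theorem aevalsmul {n : ℕ} (X : Matrix (Fin n) (Fin n) ℂ) (k : ℕ) (a : ℂ) :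
    Polynomial.aeval X (Polynomial.monomial k a) = a • X ^ k := by
  rw [Polynomial.aeval_monomial, ← Algebra.smul_def]

theorem auxD {n : ℕ} (p : ℕ) (X J G : Matrix (Fin n) (Fin n) ℂ)
    (hGX : Commute X G) (h : X * J - J * X = X ^ p * G)
    (e1 : Fin n → ℂ) (hJe1 : J.mulVec e1 = 0) (f : Polynomial ℂ) :
    (J * Polynomial.aeval X f).mulVec e1
      = -((X ^ p * G * Polynomial.aeval X (Polynomial.derivative f)).mulVec e1) := by
  induction f using Polynomial.induction_on' with
  | add a b ha hb =>
    simp only [map_add, mul_add, Matrix.add_mulVec, ha, hb, neg_add]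
  | monomial k a =>
    rw [Polynomial.derivative_monomial]
    rcases k with _ | k
    · simp [aevalsmul, mul_smul_comm, Matrix.smul_mulVec, ← Matrix.mulVec_mulVec, hJe1,
        Algebra.algebraMap_eq_smul_one, Matrix.one_mulVec, Matrix.mulVec_smul]
    · rw [aevalsmul, aevalsmul, Nat.add_sub_cancel]
      have hL : (J * (a • X ^ (k+1))) *ᵥ e1 = -((a * ((k:ℂ)+1)) • ((X^(k+p) * G) *ᵥ e1)) := by
        rw [mul_smul_comm, auxComm p X J G hGX h k, smul_sub, Matrix.sub_mulVec]
        rw [show (a • (X^(k+1) * J)) *ᵥ e1 = (0 : Fin n → ℂ) from by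
          rw [Matrix.smul_mulVec, ← Matrix.mulVec_mulVec, hJe1, Matrix.mulVec_zero, smul_zero]]
        rw [zero_sub, Matrix.smul_mulVec, Matrix.smul_mulVec, smul_smul, neg_inj]
      have hR : (X ^ p * G * ((a * ((k+1:ℕ):ℂ)) • X ^ k)) *ᵥ e1
          = (a * ((k:ℂ)+1)) • ((X^(k+p) * G) *ᵥ e1) := by
        rw [mul_smul_comm, Matrix.smul_mulVec]
        rw [mul_assoc (X ^ p) G (X ^ k), ← (hGX.pow_left k).eq, ← mul_assoc, ← pow_add, add_comm p k]
        congr 1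
        push_cast
        ring
      rw [hL, hR]

theorem auxPoly (q t : ℕ) (g f : Polynomial ℂ) :
    (Polynomial.X : Polynomial ℂ)^(q+2) * g * Polynomial.derivative (Polynomial.X^(t+1) * f)
    = Polynomial.X^(t+1+(q+1)) *
        (((t:ℂ)+1) • (g*f) + Polynomial.X * (g * Polynomial.derivative f)) := by
  rw [Polynomial.derivative_mul, Polynomial.derivative_X_pow, Polynomial.smul_eq_C_mul]
  simp only [Nat.add_sub_cancel, Nat.cast_add, Nat.cast_one, _root_.map_add, _root_.map_one]
  ring

theorem stmt9 (n : ℕ) (hn : 1 ≤ n) (p : ℕ) (hp2 : 2 ≤ p) (hpn : p ≤ n - 1)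
    (g : Polynomial ℂ) (hg0 : Polynomial.eval 0 g ≠ 0) (hgdeg : g.natDegree < n - p)
    (J : Matrix (Fin n) (Fin n) ℂ)
    (hJ : ∀ i j : Fin n, J i j = if (i : ℕ) + 1 = (j : ℕ) then 1 else 0)
    (X : Matrix (Fin n) (Fin n) ℂ) (hX : IsNilpotent X)
    (h : X * J - J * X = X ^ p * Polynomial.aeval X g) :
    X.mulVec (Pi.single ⟨0, by omega⟩ 1) = 0 := by
  classical
  by_contra hv0
  set e1 : Fin n → ℂ := Pi.single (⟨0, by omega⟩ : Fin n) 1 with he1def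
  have hv : X.mulVec e1 ≠ 0 := hv0
  obtain ⟨q, rfl⟩ : ∃ q, p = q + 2 := ⟨p - 2, by omega⟩
  have hGX : Commute X (Polynomial.aeval X g) := auxCommute X g
  have hJe1 : J.mulVec e1 = 0 := by
    funext i
    rw [auxJ J hJ]
    split
    · next hh =>
      exact Pi.single_eq_of_ne (by simp [Fin.ext_iff]) 1
    · rfl
  obtain ⟨N, hN⟩ := hX
  have hex : ∃ k, (X ^ k).mulVec e1 = 0 := ⟨N, by rw [hN, Matrix.zero_mulVec]⟩
  have hm1 : (X ^ (Nat.find hex)).mulVec e1 = 0 := Nat.find_spec hex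
  have hmin : ∀ k < Nat.find hex, (X ^ k).mulVec e1 ≠ 0 := fun k hk => Nat.find_min hex hk
  have he1ne : e1 ≠ 0 := by
    intro hco
    have := congrFun hco ⟨0, by omega⟩
    simp [he1def] at this
  have hm2 : 2 ≤ Nat.find hex := by
    by_contra hcon
    push_neg at hcon
    interval_cases hfind : (Nat.find hex)
    · rw [pow_zero, Matrix.one_mulVec] at hm1; exact he1ne hm1
    · rw [pow_one] at hm1; exact hv hm1
  set r := Nat.find hex - 1 with hrdef
  have hr1 : 1 ≤ r := by omega
  have hXr : (X ^ r).mulVec e1 ≠ 0 := hmin r (by omega)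
  have hXr1 : (X ^ (r + 1)).mulVec e1 = 0 := by
    rw [show r + 1 = Nat.find hex by omega]; exact hm1
  have hhigh : ∀ a : ℕ, r + 1 ≤ a → (X ^ a).mulVec e1 = 0 := by
    intro a ha
    rw [show a = (a - (r+1)) + (r+1) by omega, pow_add, ← Matrix.mulVec_mulVec, hXr1,
      Matrix.mulVec_zero]
  -- order lemma
  have horder : ∀ (k : ℕ), ∀ (mm : ℕ), ∃ f : Polynomial ℂ,
      (J ^ mm).mulVec ((X ^ (k+1)).mulVec e1)
        = (Polynomial.aeval X (Polynomial.X ^ ((k+1) + mm*(q+1)) * f)).mulVec e1 := by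
    intro k mm
    induction mm with
    | zero => exact ⟨1, by simp⟩
    | succ mm ih =>
      obtain ⟨f, hf⟩ := ih
      refine ⟨-((((k + mm*(q+1) : ℕ):ℂ)+1) • (g * f) + Polynomial.X * (g * Polynomial.derivative f)), ?_⟩
      rw [pow_succ', ← Matrix.mulVec_mulVec, hf, Matrix.mulVec_mulVec]
      rw [auxD (q+2) X J (Polynomial.aeval X g) hGX h e1 hJe1
        (Polynomial.X ^ ((k+1) + mm*(q+1)) * f)]
      have hmat : X ^ (q+2) * Polynomial.aeval X g
            * Polynomial.aeval X (Polynomial.derivative (Polynomial.X ^ ((k+1) + mm*(q+1)) * f))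
          = Polynomial.aeval X ((Polynomial.X : Polynomial ℂ) ^ (q+2) * g
            * Polynomial.derivative (Polynomial.X ^ ((k+1) + mm*(q+1)) * f)) := by
        simp only [_root_.map_mul, map_pow, Polynomial.aeval_X]
      rw [hmat]
      rw [show (k+1) + mm*(q+1) = (k + mm*(q+1)) + 1 by omega]
      rw [auxPoly q (k + mm*(q+1)) g f]
      rw [show (k + mm*(q+1)) + 1 + (q+1) = (k+1) + (mm+1)*(q+1) by ring]
      rw [mul_neg, map_neg, Matrix.neg_mulVec]
  -- kill lemma
  have hkill : ∀ k : ℕ, k ≤ r → (J ^ r).mulVec ((X ^ k).mulVec e1) = 0 := by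
    intro k hk
    rcases k with _ | k
    · rw [pow_zero, Matrix.one_mulVec]
      rw [show r = (r-1)+1 by omega, pow_succ, ← Matrix.mulVec_mulVec, hJe1, Matrix.mulVec_zero]
    · obtain ⟨f, hf⟩ := horder k r
      rw [hf]
      set s := (k+1) + r*(q+1) with hsdef
      have hrs : r ≤ r * (q+1) := Nat.le_mul_of_pos_right r (by omega)
      have hs : r + 1 ≤ s := by omega
      have hpoly : (Polynomial.X : Polynomial ℂ)^s * f
          = (Polynomial.X^(s-(r+1)) * f) * Polynomial.X^(r+1) := by
        rw [mul_assoc, mul_comm f, ← mul_assoc, ← pow_add]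
        congr 2
        omega
      rw [hpoly, _root_.map_mul, ← Matrix.mulVec_mulVec,
        show Polynomial.aeval X ((Polynomial.X : Polynomial ℂ)^(r+1)) = X^(r+1) from by
          rw [map_pow, Polynomial.aeval_X],
        hXr1, Matrix.mulVec_zero]
  -- support lemma
  have hsupp : ∀ k : ℕ, k ≤ r → ∀ j : Fin n, r ≤ (j:ℕ) → (X ^ k).mulVec e1 j = 0 := by
    intro k hk j hj
    have hlt : (j:ℕ) - r + r < n := by have := j.isLt; omega
    have h1 := auxJpow J hJ r ((X^k).mulVec e1) ⟨(j:ℕ)-r, by omega⟩ hlt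
    rw [hkill k hk, Pi.zero_apply] at h1
    have h3 : (X ^ k).mulVec e1 j = (X ^ k).mulVec e1 ⟨(j:ℕ)-r+r, hlt⟩ := by
      congr 1; exact Fin.ext (show (j:ℕ) = (j:ℕ) - r + r by omega)
    rw [h3]; exact h1.symm
  -- linear independence
  have hlin : LinearIndependent ℂ (fun k : Fin (r+1) => (X ^ (k:ℕ)).mulVec e1) := by
    rw [Fintype.linearIndependent_iff]
    intro c hc
    have key : ∀ i : Fin (r+1), (∀ j : Fin (r+1), (j:ℕ) < (i:ℕ) → c j = 0) → c i = 0 := by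
      intro i hi
      have h2 : ∑ k : Fin (r+1), c k • (X ^ (r - (i:ℕ) + (k:ℕ))).mulVec e1 = 0 := by
        calc ∑ k : Fin (r+1), c k • (X ^ (r - (i:ℕ) + (k:ℕ))).mulVec e1
            = (X ^ (r - (i:ℕ))).mulVecLin (∑ k : Fin (r+1), c k • (X ^ (k:ℕ)).mulVec e1) := by
              rw [map_sum]
              apply Finset.sum_congr rfl
              intro k _
              rw [_root_.map_smul, Matrix.mulVecLin_apply, Matrix.mulVec_mulVec, ← pow_add]
          _ = 0 := by rw [hc, map_zero]
      rw [Finset.sum_eq_single i] at h2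
      · rw [show r - (i:ℕ) + (i:ℕ) = r from by have := i.isLt; omega] at h2
        rcases smul_eq_zero.mp h2 with h3 | h3
        · exact h3
        · exact absurd h3 hXr
      · intro b _ hb
        rcases Nat.lt_or_ge (b:ℕ) (i:ℕ) with hblt | hbge
        · rw [hi b hblt, zero_smul]
        · have hib : (i:ℕ) < (b:ℕ) :=
            lt_of_le_of_ne hbge (fun hcontra => hb (Fin.ext hcontra.symm))
          rw [hhigh (r - (i:ℕ) + (b:ℕ)) (by have := i.isLt; omega), smul_zero]
      · intro hni; exact absurd (Finset.mem_univ i) hni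
    have main : ∀ N : ℕ, ∀ i : Fin (r+1), (i:ℕ) < N → c i = 0 := by
      intro N
      induction N with
      | zero => intro i hi; omega
      | succ N ih =>
        intro i hi
        exact key i (fun j hj => ih j (by omega))
    exact fun i => main (r+2) i (by have := i.isLt; omega)
  have hcard1 : r + 1 ≤ n := by
    have hc := hlin.fintype_card_le_finrank
    rwa [Fintype.card_fin, Module.finrank_fin_fun] at hc
  -- truncation
  let T : (Fin n → ℂ) →ₗ[ℂ] (Fin r → ℂ) := LinearMap.funLeft ℂ ℂ (Fin.castLE (by omega))
  have hlin2 : LinearIndependent ℂ (fun k : Fin (r+1) => T ((X ^ (k:ℕ)).mulVec e1)) := by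
    rw [Fintype.linearIndependent_iff]
    intro c hc
    have hw : ∑ k : Fin (r+1), c k • (X ^ (k:ℕ)).mulVec e1 = 0 := by
      funext j
      rw [Finset.sum_apply, Pi.zero_apply]
      rcases Nat.lt_or_ge (j:ℕ) r with hj | hj
      · have h5 := congrFun hc ⟨(j:ℕ), hj⟩
        rw [Finset.sum_apply, Pi.zero_apply] at h5
        calc ∑ k : Fin (r+1), (c k • (X ^ (k:ℕ)).mulVec e1) j
            = ∑ k : Fin (r+1), (c k • T ((X ^ (k:ℕ)).mulVec e1)) ⟨(j:ℕ), hj⟩ := by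
              apply Finset.sum_congr rfl
              intro k _
              rw [Pi.smul_apply, Pi.smul_apply]
              congr 1
          _ = 0 := h5
      · apply Finset.sum_eq_zero
        intro k _
        rw [Pi.smul_apply, hsupp (k:ℕ) (by have := k.isLt; omega) j hj, smul_zero]
    exact fun i => (Fintype.linearIndependent_iff.mp hlin) c hw i
  have hcard2 := hlin2.fintype_card_le_finrank
  rw [Fintype.card_fin, Module.finrank_fin_fun] at hcard2
  omega
end

section
/- Let n ≥ 1, let p be an integer with 2 ≤ p ≤ n−1, let g be a polynomial with complex coefficients with g(0) ≠ 0 and deg(g) < n − p, and let J_n be the n×n nilpotent Jordan block. Every nilpotent n×n complex matrix X satisfying X J_n − J_n X = X^p · g(X) is strictly upper triangular, i.e. X i j = 0 whenever j ≤ i. -/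
/-- Action of powers of the shift matrix on vectors. -/
lemma aux_pow_mulVec (n : ℕ) (J : Matrix (Fin n) (Fin n) ℂ)
    (hJ : ∀ i j : Fin n, J i j = if (i : ℕ) + 1 = (j : ℕ) then 1 else 0)
    (v : Fin n → ℂ) :
    ∀ (m : ℕ) (t : Fin n),
      (J ^ m).mulVec v t = if h : (t : ℕ) + m < n then v ⟨(t : ℕ) + m, h⟩ else 0 := by
  intro m
  induction m with
  | zero =>
    intro t
    rw [pow_zero, Matrix.one_mulVec, dif_pos (by simpa using t.isLt)]
    congr 1 <;> simp
  | succ m ih =>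
    intro t
    rw [pow_succ', ← Matrix.mulVec_mulVec]
    have hstep : J.mulVec ((J ^ m).mulVec v) t =
        if h : (t : ℕ) + 1 < n then (J ^ m).mulVec v ⟨(t : ℕ) + 1, h⟩ else 0 := by
      simp only [Matrix.mulVec, dotProduct]
      by_cases h1 : (t : ℕ) + 1 < n
      · rw [dif_pos h1]
        rw [Finset.sum_eq_single (⟨(t : ℕ) + 1, h1⟩ : Fin n)]
        · simp [hJ]
        · intro s _ hs
          have hne : ¬ ((t : ℕ) + 1 = (s : ℕ)) := by
            intro hc; exact hs (Fin.ext hc.symm)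
          simp [hJ, hne]
        · intro hs; exact absurd (Finset.mem_univ _) hs
      · rw [dif_neg h1]
        apply Finset.sum_eq_zero
        intro s _
        have hne : ¬ ((t : ℕ) + 1 = (s : ℕ)) := by
          have := s.isLt; omega
        simp [hJ, hne]
    rw [hstep]
    by_cases h1 : (t : ℕ) + 1 < n
    · rw [dif_pos h1, ih]
      simp only [Fin.val_mk]
      by_cases h2 : (t : ℕ) + (m + 1) < n
      · rw [dif_pos (show (t : ℕ) + 1 + m < n by omega), dif_pos h2]
        congr 1
        simp only [Fin.mk.injEq]
        omega
      · rw [dif_neg (show ¬ ((t : ℕ) + 1 + m < n) by omega), dif_neg h2]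
    · rw [dif_neg h1, dif_neg (show ¬ ((t : ℕ) + (m + 1) < n) by omega)]

/-- J-invariant subspaces are stable under powers of J. -/
lemma aux_inv_pow (n : ℕ) (J : Matrix (Fin n) (Fin n) ℂ)
    (W : Submodule ℂ (Fin n → ℂ)) (hW : ∀ v ∈ W, J.mulVec v ∈ W) :
    ∀ (m : ℕ) (v : Fin n → ℂ), v ∈ W → (J ^ m).mulVec v ∈ W := by
  intro m
  induction m with
  | zero => intro v hv; rw [pow_zero, Matrix.one_mulVec]; exact hv
  | succ m ih =>
    intro v hv
    rw [pow_succ', ← Matrix.mulVec_mulVec]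
    exact hW _ (ih v hv)

/-- A J-invariant subspace containing a vector with nonzero j-th coordinate
contains the j-th standard basis vector. -/
lemma aux_single_mem (n : ℕ) (J : Matrix (Fin n) (Fin n) ℂ)
    (hJ : ∀ i j : Fin n, J i j = if (i : ℕ) + 1 = (j : ℕ) then 1 else 0)
    (W : Submodule ℂ (Fin n → ℂ)) (hW : ∀ v ∈ W, J.mulVec v ∈ W) :
    ∀ (j : Fin n) (v : Fin n → ℂ), v ∈ W → v j ≠ 0 → Pi.single j (1 : ℂ) ∈ W := by
  suffices H : ∀ (N : ℕ) (j : Fin n), (j : ℕ) < N →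
      ∀ (v : Fin n → ℂ), v ∈ W → v j ≠ 0 → Pi.single j (1 : ℂ) ∈ W by
    intro j v hv hvj
    exact H n j j.isLt v hv hvj
  intro N
  induction N with
  | zero => intro j hj; omega
  | succ N ih =>
    intro j hj v hv hvj
    classical
    -- find the maximal index ≥ j where v is nonzero, and shift it down to j
    set S : Finset (Fin n) := Finset.univ.filter (fun t : Fin n => (j : ℕ) ≤ (t : ℕ) ∧ v t ≠ 0)
      with hS
    have hjS : j ∈ S := by rw [hS, Finset.mem_filter]; exact ⟨Finset.mem_univ _, le_refl _, hvj⟩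
    have hSne : S.Nonempty := ⟨j, hjS⟩
    set i := S.max' hSne with hidef
    have hmi : i ∈ S := S.max'_mem hSne
    rw [hS, Finset.mem_filter] at hmi
    have hji : (j : ℕ) ≤ (i : ℕ) := hmi.2.1
    have hvi : v i ≠ 0 := hmi.2.2
    have hiLt : (i : ℕ) < n := i.isLt
    set w := (J ^ ((i : ℕ) - (j : ℕ))).mulVec v with hwdef
    have hwW : w ∈ W := aux_inv_pow n J W hW _ v hv
    have hwj : w j = v i := by
      rw [hwdef, aux_pow_mulVec n J hJ, dif_pos (show (j : ℕ) + ((i : ℕ) - (j : ℕ)) < n by omega)]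
      congr 1
      apply Fin.ext
      simp only [Fin.val_mk]
      omega
    have hwt : ∀ t : Fin n, (j : ℕ) < (t : ℕ) → w t = 0 := by
      intro t ht
      rw [hwdef, aux_pow_mulVec n J hJ]
      split_ifs with hcase
      · by_contra hne
        have hsS : (⟨(t : ℕ) + ((i : ℕ) - (j : ℕ)), hcase⟩ : Fin n) ∈ S := by
          rw [hS, Finset.mem_filter]
          refine ⟨Finset.mem_univ _, ?_, hne⟩
          simp only [Fin.val_mk]
          omega
        have hle : (⟨(t : ℕ) + ((i : ℕ) - (j : ℕ)), hcase⟩ : Fin n) ≤ i := S.le_max' _ hsS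
        rw [Fin.le_def] at hle
        simp only [Fin.val_mk] at hle
        omega
      · rfl
    -- build the standard basis vector
    set T : Finset (Fin n) := Finset.univ.filter (fun t : Fin n => (t : ℕ) < (j : ℕ)) with hT
    have hsummem : (∑ t ∈ T, w t • (Pi.single t (1 : ℂ) : Fin n → ℂ)) ∈ W := by
      apply Submodule.sum_mem
      intro t htT
      rw [hT, Finset.mem_filter] at htT
      by_cases hwt0 : w t = 0
      · rw [hwt0, zero_smul]; exact W.zero_mem
      · exact W.smul_mem _ (ih t (by omega) w hwW hwt0)
    have hzW : (w j)⁻¹ • (w - ∑ t ∈ T, w t • (Pi.single t (1 : ℂ) : Fin n → ℂ)) ∈ W :=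
      W.smul_mem _ (W.sub_mem hwW hsummem)
    have hz : (w j)⁻¹ • (w - ∑ t ∈ T, w t • (Pi.single t (1 : ℂ) : Fin n → ℂ)) = Pi.single j (1 : ℂ) := by
      funext x
      have hsumx : (∑ t ∈ T, w t • (Pi.single t (1 : ℂ) : Fin n → ℂ)) x
          = if (x : ℕ) < (j : ℕ) then w x else 0 := by
        rw [Finset.sum_apply]
        by_cases hx : (x : ℕ) < (j : ℕ)
        · rw [if_pos hx]
          rw [Finset.sum_eq_single x]
          · simp
          · intro t htT htx
            simp [Pi.single_apply, Ne.symm htx]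
          · intro hxT
            exact absurd (by rw [hT, Finset.mem_filter]; exact ⟨Finset.mem_univ _, hx⟩) hxT
        · rw [if_neg hx]
          apply Finset.sum_eq_zero
          intro t htT
          rw [hT, Finset.mem_filter] at htT
          have hxt : x ≠ t := by intro hc; rw [hc] at hx; exact hx htT.2
          simp [Pi.single_apply, hxt]
      simp only [Pi.smul_apply, Pi.sub_apply, hsumx, smul_eq_mul]
      rcases lt_trichotomy ((x : ℕ)) ((j : ℕ)) with hlt | heq | hgt
      · rw [if_pos hlt, Pi.single_apply, if_neg (by intro hc; rw [hc] at hlt; omega)]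
        ring
      · have hxj : x = j := Fin.ext heq
        rw [if_neg (by omega), hxj, Pi.single_apply, if_pos rfl, sub_zero]
        field_simp [hwj, hvi]
      · rw [if_neg (by omega), hwt x hgt, Pi.single_apply,
          if_neg (by intro hc; rw [hc] at hgt; omega)]
        ring
    rw [← hz]
    exact hzW

theorem stmt10 (n : ℕ) (hn : 1 ≤ n) (p : ℕ) (hp2 : 2 ≤ p) (hpn : p ≤ n - 1)
    (g : Polynomial ℂ) (hg0 : Polynomial.eval 0 g ≠ 0) (hgdeg : g.natDegree < n - p)
    (J : Matrix (Fin n) (Fin n) ℂ)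
    (hJ : ∀ i j : Fin n, J i j = if (i : ℕ) + 1 = (j : ℕ) then 1 else 0)
    (X : Matrix (Fin n) (Fin n) ℂ) (hX : IsNilpotent X)
    (h : X * J - J * X = X ^ p * Polynomial.aeval X g) :
    ∀ i j : Fin n, (j : ℕ) ≤ (i : ℕ) → X i j = 0 := by
  classical
  set G := Polynomial.aeval X g with hGdef
  -- G commutes with X
  have hGX : X * G = G * X := by
    rw [hGdef]
    calc X * Polynomial.aeval X g = Polynomial.aeval X (Polynomial.X * g) := by
          rw [map_mul, Polynomial.aeval_X]
      _ = Polynomial.aeval X (g * Polynomial.X) := by rw [mul_comm]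
      _ = Polynomial.aeval X g * X := by rw [map_mul, Polynomial.aeval_X]
  have hGpow : ∀ m : ℕ, G * X ^ m = X ^ m * G := by
    intro m
    induction m with
    | zero => simp
    | succ m ih =>
      rw [pow_succ, ← mul_assoc, ih, mul_assoc, ← hGX, ← mul_assoc]
  have h' : X * J = X ^ p * G + J * X := sub_eq_iff_eq_add.mp h
  -- commutator formula for powers (with ℕ-scalar)
  have hcomm : ∀ k : ℕ, X ^ (k + 1) * J = J * X ^ (k + 1) + (k + 1) • (X ^ (k + p) * G) := by
    intro k
    induction k with
    | zero =>
      simp only [zero_add, pow_one, one_smul]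
      rw [h', add_comm]
    | succ k ih =>
      have e1 : X ^ (k + 1 + 1) * J = X * (X ^ (k + 1) * J) := by
        rw [← mul_assoc, ← pow_succ']
      rw [e1, ih, mul_add, ← mul_assoc, h', add_mul, mul_assoc J X (X ^ (k + 1)), ← pow_succ']
      have e2 : X ^ p * G * X ^ (k + 1) = X ^ (k + 1 + p) * G := by
        rw [mul_assoc, hGpow, ← mul_assoc, ← pow_add]
        congr 2
        omega
      rw [e2]
      have e3 : X * ((k + 1) • (X ^ (k + p) * G)) = (k + 1) • (X ^ (k + 1 + p) * G) := by
        rw [mul_smul_comm, ← mul_assoc, ← pow_succ']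
        congr 3
        omega
      rw [e3, succ_nsmul (X ^ (k + 1 + p) * G) (k + 1)]
      abel
  -- kernel invariance under J
  have hker : ∀ (m : ℕ) (v : Fin n → ℂ), (X ^ (m + 1)).mulVec v = 0 →
      (X ^ (m + 1)).mulVec (J.mulVec v) = 0 := by
    intro m v hv
    have e0 : X ^ (p - 1) * G * X ^ (m + 1) = X ^ (m + p) * G := by
      rw [mul_assoc, hGpow, ← mul_assoc, ← pow_add]
      congr 2
      omega
    have e1 : X ^ (m + 1) * J =
        J * X ^ (m + 1) + (m + 1) • (X ^ (p - 1) * G * X ^ (m + 1)) := by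
      rw [e0]
      exact hcomm m
    rw [Matrix.mulVec_mulVec, e1, Matrix.add_mulVec, Matrix.smul_mulVec,
      ← Matrix.mulVec_mulVec, ← Matrix.mulVec_mulVec, hv, Matrix.mulVec_zero,
      Matrix.mulVec_zero, smul_zero, add_zero]
  -- main argument
  intro i j hij
  by_contra hXij
  have hiLt : (i : ℕ) < n := i.isLt
  set ej : Fin n → ℂ := Pi.single j (1 : ℂ) with hejdef
  have hXn : X ^ n = 0 := by
    have h1 := Matrix.isNilpotent_charpoly_sub_pow_of_isNilpotent hX
    have h2 : X.charpoly - Polynomial.X ^ (Fintype.card (Fin n)) = 0 := h1.eq_zero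
    have h3 : X.charpoly = Polynomial.X ^ n := by
      rw [sub_eq_zero] at h2; simpa using h2
    have h4 := Matrix.aeval_self_charpoly X
    rw [h3] at h4; simpa using h4
  have hex : ∃ k, (X ^ k).mulVec ej = 0 := ⟨n, by rw [hXn, Matrix.zero_mulVec]⟩
  have hk0 : Nat.find hex ≠ 0 := by
    intro h0
    have hspec := Nat.find_spec hex
    rw [h0, pow_zero, Matrix.one_mulVec] at hspec
    have := congrFun hspec j
    simp [hejdef] at this
  obtain ⟨m, hm⟩ : ∃ m, Nat.find hex = m + 1 := ⟨Nat.find hex - 1, by omega⟩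
  set W : Submodule ℂ (Fin n → ℂ) := LinearMap.ker (Matrix.mulVecLin (X ^ m)) with hWdef
  have hmemW : ∀ v : Fin n → ℂ, v ∈ W ↔ (X ^ m).mulVec v = 0 := by
    intro v
    rw [hWdef, LinearMap.mem_ker, Matrix.mulVecLin_apply]
  have hWinv : ∀ v ∈ W, J.mulVec v ∈ W := by
    intro v hv
    rw [hmemW] at hv ⊢
    rcases Nat.eq_zero_or_pos m with hm0 | hmpos
    · rw [hm0, pow_zero, Matrix.one_mulVec] at hv ⊢
      rw [hv, Matrix.mulVec_zero]
    · obtain ⟨m', rfl⟩ : ∃ m', m = m' + 1 := ⟨m - 1, by omega⟩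
      exact hker m' v hv
  have huW : X.mulVec ej ∈ W := by
    rw [hmemW, Matrix.mulVec_mulVec, ← pow_succ]
    have := Nat.find_spec hex
    rwa [hm] at this
  have hui : X.mulVec ej i = X i j := by
    rw [hejdef]
    simp [Matrix.mulVec_single]
  set v : Fin n → ℂ := (J ^ ((i : ℕ) - (j : ℕ))).mulVec (X.mulVec ej) with hvdef
  have hvW : v ∈ W := aux_inv_pow n J W hWinv _ _ huW
  have hvj : v j ≠ 0 := by
    rw [hvdef, aux_pow_mulVec n J hJ,
      dif_pos (show (j : ℕ) + ((i : ℕ) - (j : ℕ)) < n by omega)]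
    have he : (⟨(j : ℕ) + ((i : ℕ) - (j : ℕ)), by omega⟩ : Fin n) = i := by
      apply Fin.ext
      simp only [Fin.val_mk]
      omega
    rw [he, hui]
    exact hXij
  have hsingle : Pi.single j (1 : ℂ) ∈ W := aux_single_mem n J hJ W hWinv j v hvW hvj
  rw [hmemW] at hsingle
  exact (Nat.find_min hex (by omega : m < Nat.find hex)) hsingle
end

section
/- Let n ≥ 1, let g be a polynomial with complex coefficients with g(0) = 1 and deg(g) < n−1, and let A, X be n×n complex matrices such that XA − AX = X · g(X) and X is nilpotent. Then for every integer k ≥ 1 the kernel of X^k is A-invariant: if X^k v = 0 for v ∈ ℂⁿ, then X^k (A v) = 0. -/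
theorem stmt12 (n : ℕ) (hn : 1 ≤ n) (g : Polynomial ℂ)
    (hg0 : Polynomial.eval 0 g = 1) (hgdeg : g.natDegree < n - 1)
    (A X : Matrix (Fin n) (Fin n) ℂ)
    (h : X * A - A * X = X * Polynomial.aeval X g) (hX : IsNilpotent X)
    (k : ℕ) (hk : 1 ≤ k) (v : Fin n → ℂ) (hv : (X ^ k).mulVec v = 0) :
    (X ^ k).mulVec (A.mulVec v) = 0 := by
  set G := Polynomial.aeval X g with hG
  have hc : Commute X G := by
    have h1 : Polynomial.aeval X (g * Polynomial.X) = G * X := by simp [hG]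
    have h2 : Polynomial.aeval X (Polynomial.X * g) = X * G := by simp [hG]
    show X * G = G * X
    rw [← h1, ← h2, mul_comm]
  have hXA : X * A = A * X + X * G := by rw [← h]; abel
  have key : ∀ m : ℕ, X ^ m * A = A * X ^ m + (m : ℂ) • (X ^ m * G) := by
    intro m
    induction m with
    | zero => simp
    | succ m ih =>
      rw [pow_succ', mul_assoc, ih, mul_add, ← mul_assoc, hXA]
      have e1 : X * ((m : ℂ) • (X ^ m * G)) = (m : ℂ) • (X ^ (m + 1) * G) := by
        rw [mul_smul_comm, ← mul_assoc, ← pow_succ']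
      have e2 : X * G * X ^ m = X ^ (m + 1) * G := by
        rw [mul_assoc, ← (hc.pow_left m).eq, ← mul_assoc, ← pow_succ']
      rw [e1, add_mul, e2, mul_assoc, ← pow_succ']
      push_cast
      rw [add_smul, one_smul]
      abel
  have hkey := congrArg (fun M : Matrix (Fin n) (Fin n) ℂ => M.mulVec v) (key k)
  simp only [Matrix.add_mulVec, Matrix.smul_mulVec] at hkey
  have hGk : (X ^ k * G).mulVec v = 0 := by
    rw [(hc.pow_left k).eq, ← Matrix.mulVec_mulVec, hv, Matrix.mulVec_zero]
  rw [← Matrix.mulVec_mulVec] at hkey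
  rw [hkey, ← Matrix.mulVec_mulVec, hv, Matrix.mulVec_zero, hGk, smul_zero, add_zero]
end

section
/- Let n ≥ 1, let g be a polynomial with complex coefficients with g(0) = 1 and deg(g) < n−1, and let A, X be n×n complex matrices such that XA − AX = X · g(X) and X is nilpotent. Let λ ∈ ℂ, let u ∈ ℂⁿ and let p be an integer with 1 ≤ p ≤ n such that (A − λ·I_n)^p u = 0. Then for every integer s ≥ 1 the vector X^s u lies in the sum of subspaces Σ_{i=s}^{n−1} ker((A + (i − λ)·I_n)^p) of ℂⁿ. -/
open Polynomial Matrix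

namespace Stmt13Aux


variable {n : ℕ}

lemma aeval_comm (X : Matrix (Fin n) (Fin n) ℂ) (u v : ℂ[X]) :
    aeval X u * aeval X v = aeval X v * aeval X u := by
  rw [← _root_.map_mul, ← _root_.map_mul, mul_comm]

lemma X_aeval_comm (X : Matrix (Fin n) (Fin n) ℂ) (u : ℂ[X]) :
    X * aeval X u = aeval X u * X := by
  simpa using aeval_comm X Polynomial.X u

lemma comm_pow (A X : Matrix (Fin n) (Fin n) ℂ) (g : ℂ[X])
    (h : X * A - A * X = X * aeval X g) (j : ℕ) :
    A * X ^ j = X ^ j * A - (j : ℂ) • (X ^ j * aeval X g) := by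
  have hAX : A * X = X * A - X * aeval X g := by rw [← h]; abel
  induction j with
  | zero => simp
  | succ k ih =>
    rw [pow_succ, ← mul_assoc, ih, sub_mul, smul_mul_assoc, mul_assoc, hAX,
      mul_assoc, ← X_aeval_comm, Nat.cast_succ]
    rw [mul_sub, ← mul_assoc, ← mul_assoc, add_smul, one_smul]
    abel

lemma comm_aeval (A X : Matrix (Fin n) (Fin n) ℂ) (g : ℂ[X])
    (h : X * A - A * X = X * aeval X g) (q : ℂ[X]) :
    ∃ r : ℂ[X], A * aeval X q = aeval X q * A - X * aeval X r := by
  induction q using Polynomial.induction_on' with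
  | add v w hv hw =>
    obtain ⟨r1, h1⟩ := hv; obtain ⟨r2, h2⟩ := hw
    refine ⟨r1 + r2, ?_⟩
    rw [map_add, map_add, mul_add, add_mul, h1, h2, mul_add]
    abel
  | monomial j a =>
    match j with
    | 0 =>
      refine ⟨0, ?_⟩
      simp [Polynomial.aeval_monomial, Algebra.commutes]
    | (k+1) =>
      refine ⟨(a * ((k : ℂ) + 1)) • (Polynomial.X ^ k * g), ?_⟩
      have hc : ∀ B : Matrix (Fin n) (Fin n) ℂ, algebraMap ℂ _ a * B = a • B := by
        intro B; rw [Algebra.algebraMap_eq_smul_one, smul_mul_assoc, one_mul]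
      rw [Polynomial.aeval_monomial, hc, _root_.map_smul, _root_.map_mul, aeval_X_pow,
        mul_smul_comm, comm_pow A X g h (k+1), smul_mul_assoc, mul_smul_comm,
        ← mul_assoc X, ← pow_succ', Nat.cast_succ]
      module




lemma key (A X : Matrix (Fin n) (Fin n) ℂ) (g : ℂ[X]) (hg0 : eval 0 g = 1)
    (h : X * A - A * X = X * aeval X g) (m : ℕ) (d : ℂ) (q : ℂ[X]) :
    ∃ r : ℂ[X], (A + d • (1 : Matrix (Fin n) (Fin n) ℂ)) * (X ^ m * aeval X q)
      = X ^ m * aeval X q * (A + (d - m) • (1 : Matrix (Fin n) (Fin n) ℂ))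
        - X ^ (m+1) * aeval X r := by
  obtain ⟨r₀, hr₀⟩ := comm_aeval A X g h q
  refine ⟨r₀ + (m : ℂ) • (g.divX * q), ?_⟩
  have hG : aeval X g = 1 + X * aeval X g.divX := by
    conv_lhs => rw [← divX_mul_X_add g]
    rw [coeff_zero_eq_eval_zero, hg0]
    rw [map_add, _root_.map_mul, aeval_X, aeval_C, ← X_aeval_comm]
    simp [Algebra.algebraMap_eq_smul_one, add_comm]
  rw [map_add, _root_.map_smul, _root_.map_mul]
  rw [add_mul, smul_mul_assoc, one_mul, ← mul_assoc, comm_pow A X g h m,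
    sub_mul, mul_assoc (X ^ m), hr₀, smul_mul_assoc, mul_assoc (X ^ m), hG]
  simp only [mul_add, add_mul, mul_sub, sub_mul, mul_one, one_mul, smul_mul_assoc,
    mul_smul_comm, mul_assoc, pow_succ]
  module


lemma main (g : ℂ[X]) (hg0 : eval 0 g = 1)
    (A X : Matrix (Fin n) (Fin n) ℂ)
    (h : X * A - A * X = X * aeval X g) (hXn : X ^ n = 0)
    (lam : ℂ) (p : ℕ)
    (key : ∀ (m : ℕ) (d : ℂ) (q : ℂ[X]),
      ∃ r : ℂ[X], (A + d • (1 : Matrix (Fin n) (Fin n) ℂ)) * (X ^ m * aeval X q)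
      = X ^ m * aeval X q * (A + (d - m) • (1 : Matrix (Fin n) (Fin n) ℂ))
        - X ^ (m+1) * aeval X r) :
    ∀ (m s : ℕ), n - s ≤ m → 1 ≤ s → ∀ (q : ℂ[X]) (u : Fin n → ℂ),
      ((A - lam • 1) ^ p).mulVec u = 0 →
      (X ^ s * aeval X q).mulVec u ∈
        ⨆ i ∈ Finset.Icc s (n - 1),
          LinearMap.ker (((A + ((i : ℂ) - lam) • (1 : Matrix (Fin n) (Fin n) ℂ)) ^ p).mulVecLin) := by
  intro m
  induction m with
  | zero =>
    intro s hms hs q u hu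
    have hXs : X ^ s = 0 := by
      have h2 : X ^ s = X ^ n * X ^ (s - n) := by rw [← pow_add]; congr 1; omega
      rw [h2, hXn, zero_mul]
    simp [hXs]
  | succ m ih =>
    intro s hms hs q u hu
    by_cases hsn : n ≤ s
    · have hXs : X ^ s = 0 := by
        have h2 : X ^ s = X ^ n * X ^ (s - n) := by rw [← pow_add]; congr 1; omega
        rw [h2, hXn, zero_mul]
      simp [hXs]
    push_neg at hsn
    set M' : Matrix (Fin n) (Fin n) ℂ := A - lam • 1 with hM'
    set c : ℂ := (s : ℂ) - lam with hc
    set Q : Matrix (Fin n) (Fin n) ℂ := aeval X q with hQ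
    set S : Submodule ℂ (Fin n → ℂ) :=
      Submodule.span ℂ {v | ∃ (r : ℂ[X]) (k : ℕ),
        v = (X ^ (s+1) * aeval X r * M' ^ k).mulVec u} with hS
    -- S ≤ W (s+1)
    have hSW : S ≤ ⨆ i ∈ Finset.Icc (s+1) (n - 1),
        LinearMap.ker (((A + ((i : ℂ) - lam) • (1 : Matrix (Fin n) (Fin n) ℂ)) ^ p).mulVecLin) := by
      rw [hS, Submodule.span_le]
      rintro v ⟨r, k, rfl⟩
      have h1 : (X ^ (s+1) * aeval X r * M' ^ k).mulVec u
          = (X ^ (s+1) * aeval X r).mulVec ((M' ^ k).mulVec u) := by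
        rw [Matrix.mulVec_mulVec]
      rw [SetLike.mem_coe, h1]
      refine ih (s+1) (by omega) (by omega) r _ ?_
      rw [Matrix.mulVec_mulVec, ← pow_add, add_comm, pow_add, ← Matrix.mulVec_mulVec, hu,
        Matrix.mulVec_zero]
    -- S invariant under A + c•1
    have hSinv : ∀ v ∈ S, (A + c • 1).mulVec v ∈ S := by
      have hle : S ≤ Submodule.comap ((A + c • (1 : Matrix (Fin n) (Fin n) ℂ)).mulVecLin) S := by
        rw [hS, Submodule.span_le]
        rintro v ⟨r, k, rfl⟩
        rw [SetLike.mem_coe, Submodule.mem_comap, Matrix.mulVecLin_apply]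
        obtain ⟨r', hr'⟩ := key (s+1) c r
        have hsh : A + (c - ((s : ℂ) + 1)) • (1 : Matrix (Fin n) (Fin n) ℂ) = M' - 1 := by
          have he : c - ((s : ℂ) + 1) = -lam - 1 := by rw [hc]; ring
          rw [he, hM', sub_smul, neg_smul, one_smul]
          abel
        push_cast at hr'
        rw [hsh] at hr'
        have hmat : (A + c • 1) * (X ^ (s+1) * aeval X r * M' ^ k)
            = X ^ (s+1) * aeval X r * M' ^ (k+1) - X ^ (s+1) * aeval X r * M' ^ k
              - X ^ (s+1) * aeval X (Polynomial.X * r') * M' ^ k := by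
          rw [← mul_assoc, hr', _root_.map_mul, aeval_X, ← mul_assoc, ← pow_succ]
          rw [sub_mul, mul_sub, mul_one, sub_mul, mul_assoc _ M' (M' ^ k), ← pow_succ']
          all_goals abel
        rw [Matrix.mulVec_mulVec, hmat, Matrix.sub_mulVec, Matrix.sub_mulVec]
        exact sub_mem (sub_mem (Submodule.subset_span ⟨r, k+1, rfl⟩)
          (Submodule.subset_span ⟨r, k, rfl⟩)) (Submodule.subset_span ⟨Polynomial.X * r', k, rfl⟩)
      intro v hv
      exact Submodule.mem_comap.mp (hle hv)
    -- the D_k computation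
    have hD : ∀ k : ℕ, ((A + c • 1) ^ k * (X ^ s * Q)).mulVec u
        - (X ^ s * Q * M' ^ k).mulVec u ∈ S := by
      intro k
      induction k with
      | zero => simp
      | succ k ihk =>
        obtain ⟨r, hr⟩ := key s c q
        have hcs : A + (c - (s : ℂ)) • (1 : Matrix (Fin n) (Fin n) ℂ) = M' := by
          have he : c - (s : ℂ) = -lam := by rw [hc]; ring
          rw [he, hM', neg_smul]
          abel
        rw [hcs, ← hQ] at hr
        have e1 : (A + c • 1) * (X ^ s * Q * M' ^ k)
            = X ^ s * Q * M' ^ (k+1) - X ^ (s+1) * aeval X r * M' ^ k := by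
          rw [← mul_assoc, hr, sub_mul, mul_assoc (X ^ s * Q), ← pow_succ']
        have hmat : (A + c • 1) ^ (k+1) * (X ^ s * Q)
            = (A + c • 1) * ((A + c • 1) ^ k * (X ^ s * Q) - X ^ s * Q * M' ^ k)
              + X ^ s * Q * M' ^ (k+1) - X ^ (s+1) * aeval X r * M' ^ k := by
          rw [mul_sub, e1, pow_succ', mul_assoc]
          all_goals abel
        have hgen : (X ^ (s+1) * aeval X r * M' ^ k).mulVec u ∈ S :=
          Submodule.subset_span ⟨r, k, rfl⟩
        have := sub_mem (hSinv _ ihk) hgen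
        convert this using 1
        rw [hmat, Matrix.sub_mulVec, Matrix.add_mulVec, ← Matrix.mulVec_mulVec,
          Matrix.sub_mulVec, Matrix.mulVec_sub]
        all_goals abel
    -- T v ∈ W(s+1)
    have hTv : ((A + c • 1) ^ p).mulVec ((X ^ s * Q).mulVec u) ∈
        ⨆ i ∈ Finset.Icc (s+1) (n - 1),
          LinearMap.ker (((A + ((i : ℂ) - lam) • (1 : Matrix (Fin n) (Fin n) ℂ)) ^ p).mulVecLin) := by
      apply hSW
      have h0 : (X ^ s * Q * M' ^ p).mulVec u = 0 := by
        rw [← Matrix.mulVec_mulVec, hu, Matrix.mulVec_zero]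
      have h1 := hD p
      rw [h0, sub_zero] at h1
      rwa [Matrix.mulVec_mulVec]
    -- surjectivity on W(s+1)
    have hmap : ∀ i ∈ Finset.Icc (s+1) (n-1),
        LinearMap.ker (((A + ((i : ℂ) - lam) • (1 : Matrix (Fin n) (Fin n) ℂ)) ^ p).mulVecLin)
        ≤ Submodule.map (((A + c • 1) ^ p).mulVecLin)
          (LinearMap.ker (((A + ((i : ℂ) - lam) • (1 : Matrix (Fin n) (Fin n) ℂ)) ^ p).mulVecLin)) := by
      intro i hi w hw
      rw [Finset.mem_Icc] at hi
      set N : Matrix (Fin n) (Fin n) ℂ := A + ((i : ℂ) - lam) • 1 with hN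
      rw [LinearMap.mem_ker, Matrix.mulVecLin_apply] at hw
      set c' : ℂ := (s : ℂ) - (i : ℂ) with hc'
      have hc'0 : c' ≠ 0 := by
        rw [hc', sub_ne_zero]
        intro hcon
        have : s = i := Nat.cast_injective hcon
        omega
      have hcop : IsCoprime (Polynomial.X + C c') (Polynomial.X : ℂ[X]) := by
        refine ⟨C c'⁻¹, -C c'⁻¹, ?_⟩
        rw [mul_add, ← C_mul, inv_mul_cancel₀ hc'0, neg_mul]
        simp
      obtain ⟨a, b, hab⟩ := hcop.pow (m := p) (n := p)
      have hbase : N + c' • (1 : Matrix (Fin n) (Fin n) ℂ) = A + c • 1 := by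
        rw [hN, add_assoc, ← add_smul]
        have he2 : (↑i - lam) + c' = c := by rw [hc, hc']; ring
        rw [he2]
      have hT' : aeval N ((Polynomial.X + C c') ^ p) = (A + c • 1) ^ p := by
        rw [map_pow, map_add, aeval_X, aeval_C,
          show (algebraMap ℂ (Matrix (Fin n) (Fin n) ℂ)) c' = c' • 1 from
            Algebra.algebraMap_eq_smul_one c', hbase]
      have hN' : aeval N ((Polynomial.X : ℂ[X]) ^ p) = N ^ p := by rw [map_pow, aeval_X]
      have hone : aeval N a * (A + c • 1) ^ p + aeval N b * N ^ p = 1 := by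
        have h2 := congrArg (aeval N) hab
        rw [map_add, _root_.map_mul, _root_.map_mul, hT', hN', _root_.map_one] at h2
        exact h2
      have hcm1 : N ^ p * aeval N a = aeval N a * N ^ p := by
        rw [← hN']; exact aeval_comm N _ a
      have hcm2 : (A + c • 1) ^ p * aeval N a = aeval N a * (A + c • 1) ^ p := by
        rw [← hT']; exact aeval_comm N _ a
      refine Submodule.mem_map.mpr ⟨(aeval N a).mulVec w, ?_, ?_⟩
      · rw [LinearMap.mem_ker, Matrix.mulVecLin_apply, Matrix.mulVec_mulVec, hcm1,
          ← Matrix.mulVec_mulVec, hw, Matrix.mulVec_zero]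
      · rw [Matrix.mulVecLin_apply, Matrix.mulVec_mulVec, hcm2, eq_sub_of_add_eq hone,
          Matrix.sub_mulVec, Matrix.one_mulVec, ← Matrix.mulVec_mulVec, hw,
          Matrix.mulVec_zero, sub_zero]
    have hWle : (⨆ i ∈ Finset.Icc (s+1) (n - 1),
          LinearMap.ker (((A + ((i : ℂ) - lam) • (1 : Matrix (Fin n) (Fin n) ℂ)) ^ p).mulVecLin))
        ≤ Submodule.map (((A + c • 1) ^ p).mulVecLin)
          (⨆ i ∈ Finset.Icc (s+1) (n - 1),
          LinearMap.ker (((A + ((i : ℂ) - lam) • (1 : Matrix (Fin n) (Fin n) ℂ)) ^ p).mulVecLin)) := by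
      rw [Submodule.map_iSup]
      refine iSup_mono fun i => ?_
      rw [Submodule.map_iSup]
      exact iSup_mono fun hi => hmap i hi
    obtain ⟨w', hw', hww'⟩ := Submodule.mem_map.mp (hWle hTv)
    have hker : (X ^ s * Q).mulVec u - w' ∈
        LinearMap.ker (((A + (((s : ℕ) : ℂ) - lam) • (1 : Matrix (Fin n) (Fin n) ℂ)) ^ p).mulVecLin) := by
      rw [LinearMap.mem_ker, map_sub]
      simp only [Matrix.mulVecLin_apply] at hww' ⊢
      rw [hc] at hww'
      rw [hww', sub_self]
    have hsplit : (X ^ s * Q).mulVec u = ((X ^ s * Q).mulVec u - w') + w' := by abel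
    rw [hsplit]
    refine add_mem ?_ ?_
    · refine Submodule.mem_iSup_of_mem s (Submodule.mem_iSup_of_mem ?_ hker)
      exact Finset.mem_Icc.mpr ⟨le_rfl, by omega⟩
    · have hmono : (⨆ i ∈ Finset.Icc (s+1) (n - 1),
          LinearMap.ker (((A + ((i : ℂ) - lam) • (1 : Matrix (Fin n) (Fin n) ℂ)) ^ p).mulVecLin))
          ≤ ⨆ i ∈ Finset.Icc s (n - 1),
          LinearMap.ker (((A + ((i : ℂ) - lam) • (1 : Matrix (Fin n) (Fin n) ℂ)) ^ p).mulVecLin) :=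
        biSup_mono fun i hi => by rw [Finset.mem_Icc] at *; omega
      exact hmono hw'


end Stmt13Aux

theorem stmt13 (n : ℕ) (hn : 1 ≤ n) (g : Polynomial ℂ)
    (hg0 : Polynomial.eval 0 g = 1) (hgdeg : g.natDegree < n - 1)
    (A X : Matrix (Fin n) (Fin n) ℂ)
    (h : X * A - A * X = X * Polynomial.aeval X g) (hX : IsNilpotent X)
    (lam : ℂ) (u : Fin n → ℂ) (p : ℕ) (hp1 : 1 ≤ p) (hpn : p ≤ n)
    (hu : ((A - lam • (1 : Matrix (Fin n) (Fin n) ℂ)) ^ p).mulVec u = 0)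
    (s : ℕ) (hs : 1 ≤ s) :
    (X ^ s).mulVec u ∈
      ⨆ i ∈ Finset.Icc s (n - 1),
        LinearMap.ker
          (((A + ((i : ℂ) - lam) • (1 : Matrix (Fin n) (Fin n) ℂ)) ^ p).mulVecLin) := by
  have hXn : X ^ n = 0 := by
    have h1 : X.charpoly = Polynomial.X ^ (Fintype.card (Fin n)) := by
      rw [← sub_eq_zero]
      exact (Matrix.isNilpotent_charpoly_sub_pow_of_isNilpotent hX).eq_zero
    have h2 := X.aeval_self_charpoly
    rw [h1, map_pow, Polynomial.aeval_X, Fintype.card_fin] at h2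
    exact h2
  have hmain := Stmt13Aux.main g hg0 A X h hXn lam p
    (fun m d q => Stmt13Aux.key A X g hg0 h m d q) n s (by omega) hs 1 u hu
  simpa using hmain
end

section
/- Let n ≥ 1, let g be a polynomial with complex coefficients with g(0) = 1 and deg(g) < n−1, and let A, X be n×n complex matrices such that XA − AX = X · g(X) and X is nilpotent. Let λ ∈ ℂ, let u ∈ ℂⁿ and let p be an integer with 1 ≤ p ≤ n such that (A − λ·I_n)^p u = 0. If s ≥ 1 is an integer such that λ − s does not belong to the spectrum of A, then X^s u = 0 and X u lies in the sum of subspaces Σ_{i=1}^{s−1} ker((A + (i − λ)·I_n)^p) of ℂⁿ. -/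
/-!
Solving `σ' · x · g = (g - 1) · σ` modulo a power of `x` beyond the nilpotency index of `X` gives
a polynomial `σ` with `σ(0) = 1`, so that `S = σ(X)` is invertible and `S A S⁻¹ = A + g(X) - 1`
(the commutator with `A` acts on polynomials in `X` as `X g(X)` times the derivative). Then
`Y = S⁻¹ X` satisfies `Y A = (A + 1) Y`, so `Y ^ k` maps `ker (A - λ) ^ p` into
`ker (A - (λ - k)) ^ p`. Since `λ - s` is not an eigenvalue, `Y ^ s u = 0`, hence
`X ^ s u = σ(X) ^ s Y ^ s u = 0`. Finally `X u = σ(X) Y u`, and replacing `X` by `σ(X) Y` over and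
over writes any `q(X) Y u` as a combination of the vectors `Y ^ k u` with `1 ≤ k < s`.
-/

open Polynomial Matrix

namespace Polynomial

theorem aeval_mul_sub_mul_aeval {R 𝒜 : Type*} [CommRing R] [Ring 𝒜] [Algebra R 𝒜]
    {a x d : 𝒜} (had : x * a - a * x = d) (hxd : Commute x d) (q : R[X]) :
    aeval x q * a - a * aeval x q = aeval x (derivative q) * d := by
  induction q using Polynomial.induction_on with
  | C c => simp [Algebra.commutes]
  | add p q hp hq => simp only [map_add, add_mul, mul_add, ← hp, ← hq]; abel
  | monomial k c ih =>
    rw [pow_succ, ← mul_assoc]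
    generalize C c * X ^ k = p at ih ⊢
    rw [derivative_mul, derivative_X, mul_one, map_add, map_mul, map_mul, aeval_X, add_mul,
      mul_assoc _ x d, hxd.eq, ← mul_assoc (aeval x (derivative p)), ← ih, ← had]
    noncomm_ring

theorem exists_coeff_zero_eq_one_X_pow_dvd {K : Type*} [Field K] [CharZero K] {g : K[X]}
    (hg : g.coeff 0 = 1) (N : ℕ) :
    ∃ σ : K[X], σ.coeff 0 = 1 ∧ X ^ (N + 1) ∣ derivative σ * X * g - (g - 1) * σ := by
  induction N with
  | zero => exact ⟨1, coeff_one_zero, by simp [X_dvd_iff, hg]⟩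
  | succ N ih =>
    obtain ⟨σ, hσ, r, hr⟩ := ih
    obtain ⟨c, hc⟩ : ∃ c : K, r.coeff 0 + c * (N + 1) = 0 :=
      ⟨-r.coeff 0 / (N + 1),
        by rw [div_mul_cancel₀ _ (Nat.cast_add_one_ne_zero N), add_neg_cancel]⟩
    refine ⟨σ + C c * X ^ (N + 1), by simp [hσ], ?_⟩
    have hexp : derivative (σ + C c * X ^ (N + 1)) * X * g - (g - 1) * (σ + C c * X ^ (N + 1))
        = X ^ (N + 1) * (r + C c * (C ((N : K) + 1) * g - (g - 1))) := by
      rw [derivative_add, derivative_C_mul_X_pow]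
      push_cast
      rw [C_mul]
      linear_combination hr
    rw [hexp, pow_succ]
    refine mul_dvd_mul_left _ (X_dvd_iff.mpr ?_)
    rw [coeff_add, mul_coeff_zero, coeff_C_zero, coeff_sub, mul_coeff_zero, coeff_C_zero,
      coeff_sub, coeff_one_zero, hg]
    linear_combination hc

end Polynomial

theorem Commute.aeval_right {R 𝒜 : Type*} [CommSemiring R] [Semiring 𝒜] [Algebra R 𝒜]
    {x y : 𝒜} (h : Commute y x) (q : R[X]) : Commute y (aeval x q) :=
  Algebra.commute_of_mem_adjoin_singleton_of_commute (aeval_mem_adjoin_singleton R x) h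

theorem exists_commute_semiconjBy_add_one {K 𝒜 : Type*} [Field K] [CharZero K] [Ring 𝒜]
    [Algebra K 𝒜] {g : K[X]} (hg : g.coeff 0 = 1) {a x : 𝒜}
    (h : x * a - a * x = x * aeval x g) (hx : IsNilpotent x) :
    ∃ (σ : K[X]) (y : 𝒜), Commute x y ∧ SemiconjBy y a (a + 1) ∧ x = aeval x σ * y := by
  obtain ⟨e, he⟩ := hx
  obtain ⟨σ, hσ, r, hr⟩ := exists_coeff_zero_eq_one_X_pow_dvd hg e
  have hxg := (Commute.refl x).aeval_right g
  have hsa : aeval x σ * a = (a + aeval x g - 1) * aeval x σ := by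
    have hE := congrArg (aeval x) hr
    simp only [map_sub, map_mul, map_pow, map_one, aeval_X, pow_succ, he, zero_mul,
      sub_eq_zero, mul_assoc] at hE
    rw [← sub_add_cancel (aeval x σ * a) (a * aeval x σ),
      aeval_mul_sub_mul_aeval h ((Commute.refl x).mul_right hxg), hE]
    noncomm_ring
  have hs : IsUnit (aeval x σ) := by
    rw [← X_mul_divX_add σ, hσ, C_1, map_add, map_mul, aeval_X, map_one]
    exact (((Commute.refl x).aeval_right σ.divX).isNilpotent_mul_right ⟨e, he⟩).isUnit_add_one
  obtain ⟨s, hs⟩ := hs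
  rw [← hs] at hsa
  have hsinv : ↑s⁻¹ * (a + aeval x g - 1) = a * ↑s⁻¹ := by
    rw [← Units.mul_inv_cancel_right (a + aeval x g - 1) s, ← hsa, mul_assoc (s : 𝒜) a,
      s.inv_mul_cancel_left]
  have hxa : x * a = (a + aeval x g) * x := by rw [add_mul, ← hxg.eq, ← h]; abel
  refine ⟨σ, ↑s⁻¹ * x, ?_, ?_, ?_⟩
  · exact ((hs ▸ (Commute.refl x).aeval_right σ).units_inv_right).mul_right (Commute.refl x)
  · calc ↑s⁻¹ * x * a = ↑s⁻¹ * (a + aeval x g - 1) * x + ↑s⁻¹ * x := by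
          rw [mul_assoc, hxa]; noncomm_ring
      _ = (a + 1) * (↑s⁻¹ * x) := by rw [hsinv]; noncomm_ring
  · rw [← hs, s.mul_inv_cancel_left]

theorem SemiconjBy.pow_sub_smul_one {K 𝒜 : Type*} [CommRing K] [Ring 𝒜] [Algebra K 𝒜]
    {a y : 𝒜} (h : SemiconjBy y a (a + 1)) (μ : K) (k : ℕ) :
    SemiconjBy (y ^ k) (a - μ • 1) (a + ((k : K) - μ) • 1) := by
  have hk : SemiconjBy (y ^ k) a (a + k) := by
    induction k with
    | zero => simp
    | succ k ih =>
      rw [pow_succ', Nat.cast_succ, ← add_assoc, add_right_comm]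
      exact (h.add_right (Nat.cast_commute k y).symm).mul_left ih
  convert hk.sub_right ((Commute.one_right (y ^ k)).smul_right μ) using 1
  rw [sub_smul, Nat.cast_smul_eq_nsmul, nsmul_one, add_sub_assoc]

theorem SemiconjBy.mulVec_mulVec_eq_zero {ι K : Type*} [Fintype ι] [Semiring K]
    {y b c : Matrix ι ι K} (h : SemiconjBy y b c) {v : ι → K} (hv : b *ᵥ v = 0) :
    c *ᵥ (y *ᵥ v) = 0 := by
  rw [mulVec_mulVec, ← h.eq, ← mulVec_mulVec, hv, mulVec_zero]

namespace Matrix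

variable {ι K : Type*} [Fintype ι] [DecidableEq ι]

theorem eq_zero_of_pow_sub_smul_one_mulVec_eq_zero [CommRing K] {a : Matrix ι ι K} {μ : K}
    (hμ : μ ∉ spectrum K a) {p : ℕ} {v : ι → K} (hv : (a - μ • 1) ^ p *ᵥ v = 0) :
    v = 0 := by
  rw [spectrum.notMem_iff, Algebra.algebraMap_eq_smul_one, ← neg_sub] at hμ
  exact mulVec_injective_of_isUnit (((IsUnit.neg_iff _).mp hμ).pow p) (by rw [hv, mulVec_zero])

theorem aeval_mulVec_mulVec_mem [Field K] {x y : Matrix ι ι K} {σ : K[X]}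
    (hx : x = aeval x σ * y) {W : Submodule K (ι → K)} {u : ι → K} {s : ℕ}
    (hs : y ^ s *ᵥ u = 0) (hW : ∀ k, 1 ≤ k → k < s → y ^ k *ᵥ u ∈ W) (q : K[X]) :
    aeval x q *ᵥ (y *ᵥ u) ∈ W := by
  have hzero (k : ℕ) (hk : s ≤ k) : y ^ k *ᵥ u = 0 := by
    rw [← Nat.sub_add_cancel hk, pow_add, ← mulVec_mulVec, hs, mulVec_zero]
  have hyW (k : ℕ) (hk : 1 ≤ k) : y ^ k *ᵥ u ∈ W := by
    rcases lt_or_ge k s with hks | hks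
    · exact hW k hk hks
    · exact hzero k hks ▸ W.zero_mem
  suffices ∀ m k (q : K[X]), s ≤ k + m → 1 ≤ k → aeval x q *ᵥ (y ^ k *ᵥ u) ∈ W by
    simpa using this s 1 q (by omega) le_rfl
  intro m
  induction m with
  | zero =>
    intro k q hk _
    rw [hzero k hk, mulVec_zero]
    exact W.zero_mem
  | succ m ih =>
    intro k q hkm hk
    -- split off the constant term of `q` and trade the remaining factor `x` for `σ(x) y`
    have hq : aeval x q * y ^ k
        = aeval x (q.divX * σ) * y ^ (k + 1) + q.coeff 0 • y ^ k := by
      have hxk : x * y ^ k = aeval x σ * y ^ (k + 1) := by rw [pow_succ', ← mul_assoc, ← hx]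
      conv_lhs => rw [← divX_mul_X_add q, map_add, map_mul, aeval_X, aeval_C,
        Algebra.algebraMap_eq_smul_one, add_mul, mul_assoc, hxk, smul_mul_assoc, one_mul]
      rw [map_mul, mul_assoc]
    rw [mulVec_mulVec, hq, add_mulVec, smul_mulVec, ← mulVec_mulVec]
    exact W.add_mem (ih (k + 1) _ (by omega) (by omega)) (W.smul_mem _ (hyW k hk))

end Matrix

theorem stmt14_general (n : ℕ) (g : Polynomial ℂ)
    (hg0 : Polynomial.eval 0 g = 1)
    (A X : Matrix (Fin n) (Fin n) ℂ)
    (h : X * A - A * X = X * Polynomial.aeval X g) (hX : IsNilpotent X)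
    (lam : ℂ) (u : Fin n → ℂ) (p : ℕ)
    (hu : ((A - lam • (1 : Matrix (Fin n) (Fin n) ℂ)) ^ p).mulVec u = 0)
    (s : ℕ) (hspec : lam - (s : ℂ) ∉ spectrum ℂ A) :
    (X ^ s).mulVec u = 0 ∧
      X.mulVec u ∈
        ⨆ i ∈ Finset.Icc 1 (s - 1),
          LinearMap.ker
            (((A + ((i : ℂ) - lam) • (1 : Matrix (Fin n) (Fin n) ℂ)) ^ p).mulVecLin) := by
  obtain ⟨σ, Y, hXY, hYA, hXσ⟩ :=
    exists_commute_semiconjBy_add_one (by rwa [coeff_zero_eq_eval_zero]) h hX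
  have hYu (k : ℕ) : (A + ((k : ℂ) - lam) • 1) ^ p *ᵥ (Y ^ k *ᵥ u) = 0 :=
    SemiconjBy.mulVec_mulVec_eq_zero ((hYA.pow_sub_smul_one lam k).pow_right p) hu
  have hYs : Y ^ s *ᵥ u = 0 := by
    refine eq_zero_of_pow_sub_smul_one_mulVec_eq_zero hspec (p := p) ?_
    rw [sub_eq_add_neg A, ← neg_smul, neg_sub]
    exact hYu s
  constructor
  · rw [hXσ, (hXY.symm.aeval_right σ).symm.mul_pow, ← mulVec_mulVec, hYs, mulVec_zero]
  · rw [hXσ, ← mulVec_mulVec]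
    refine aeval_mulVec_mulVec_mem hXσ hYs (fun k hk hks => ?_) σ
    exact Submodule.mem_iSup_of_mem k
      (Submodule.mem_iSup_of_mem (Finset.mem_Icc.mpr ⟨hk, by omega⟩) (hYu k))

theorem stmt14 (n : ℕ) (hn : 1 ≤ n) (g : Polynomial ℂ)
    (hg0 : Polynomial.eval 0 g = 1) (hgdeg : g.natDegree < n - 1)
    (A X : Matrix (Fin n) (Fin n) ℂ)
    (h : X * A - A * X = X * Polynomial.aeval X g) (hX : IsNilpotent X)
    (lam : ℂ) (u : Fin n → ℂ) (p : ℕ) (hp1 : 1 ≤ p) (hpn : p ≤ n)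
    (hu : ((A - lam • (1 : Matrix (Fin n) (Fin n) ℂ)) ^ p).mulVec u = 0)
    (s : ℕ) (hs : 1 ≤ s) (hspec : lam - (s : ℂ) ∉ spectrum ℂ A) :
    (X ^ s).mulVec u = 0 ∧
      X.mulVec u ∈
        ⨆ i ∈ Finset.Icc 1 (s - 1),
          LinearMap.ker
            (((A + ((i : ℂ) - lam) • (1 : Matrix (Fin n) (Fin n) ℂ)) ^ p).mulVecLin) :=
  stmt14_general n g hg0 A X h hX lam u p hu s hspec
end

section
/- Let n ≥ 1, let q be a polynomial with complex coefficients, let α = q(0), and let A, X be n×n complex matrices such that q(XA − AX) = X. Then the matrix C := XA − AX is nilpotent, X − α·I_n is nilpotent, and Σ_{k=1}^{n−1} (coefficient of x^k in q) · C^k = X − α·I_n. -/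
/-!
Since `X = q(C)` is a polynomial in `C = XA - AX`, every power `C ^ k` commutes with `X`, so
`tr (C ^ (k + 1)) = tr (C ^ k X A) - tr (C ^ k A X) = 0` by cyclicity of the trace (Jacobson's
lemma). In characteristic zero, vanishing of all `tr (C ^ k)` forces nilpotency: splitting into
generalized eigenspaces gives `tr (C ^ k) = ∑ μ, dim V_μ * μ ^ k`, and evaluating against the
nodal polynomial of the other eigenvalues isolates each nonzero `μ`. Finally `C ^ n = 0`
truncates `q(C)` to its terms of degree below `n`.
-/

open Polynomial Module

namespace Module.End

variable {K V : Type*} [Field K] [AddCommGroup V] [Module K V] [FiniteDimensional K V]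

theorem trace_pow_eq_finrank_mul_pow {f : End K V} {μ : K}
    (hf : IsNilpotent (f - algebraMap K (End K V) μ)) (k : ℕ) :
    LinearMap.trace K V (f ^ k) = finrank K V * μ ^ k := by
  induction k with
  | zero => simp
  | succ k ih =>
    rw [pow_succ, mul_eq_comp,
      LinearMap.trace_comp_eq_mul_of_commute_of_isNilpotent μ (Commute.self_pow f k).symm hf, ih]
    ring

theorem finite_maxGenEigenspace_ne_bot (f : End K V) : {μ | f.maxGenEigenspace μ ≠ ⊥}.Finite :=
  WellFoundedGT.finite_ne_bot_of_iSupIndep f.independent_maxGenEigenspace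

theorem trace_pow_eq_sum_finrank_mul_pow [IsAlgClosed K] (f : End K V) (k : ℕ) :
    LinearMap.trace K V (f ^ k) = ∑ μ ∈ f.finite_maxGenEigenspace_ne_bot.toFinset,
      (finrank K (f.maxGenEigenspace μ) : K) * μ ^ k := by
  classical
  have hds := DirectSum.isInternal_submodule_of_iSupIndep_of_iSup_eq_top
    f.independent_maxGenEigenspace f.iSup_maxGenEigenspace_eq_top
  have hf : ∀ μ, Set.MapsTo f (f.maxGenEigenspace μ) (f.maxGenEigenspace μ) :=
    f.mapsTo_maxGenEigenspace_of_comm rfl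
  rw [LinearMap.trace_eq_sum_trace_restrict' hds f.finite_maxGenEigenspace_ne_bot
    (f.mapsTo_maxGenEigenspace_of_comm ((Commute.refl f).pow_right k))]
  refine Finset.sum_congr rfl fun μ _ ↦ ?_
  rw [← pow_restrict k (hf μ)]
  refine trace_pow_eq_finrank_mul_pow ?_ k
  convert f.isNilpotent_restrict_maxGenEigenspace_sub_algebraMap μ using 1
  rw [← LinearMap.restrict_sub (hf μ)
    (f.mapsTo_maxGenEigenspace_of_comm (Algebra.commutes μ f).symm μ)]
  rfl

end Module.End

theorem Finset.eq_zero_of_forall_sum_mul_pow_eq_zero {R : Type*} [CommRing R] [IsDomain R]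
    {s : Finset R} {c : R → R} (h : ∀ k, 0 < k → ∑ μ ∈ s, c μ * μ ^ k = 0)
    {μ₀ : R} (hμ₀ : μ₀ ∈ s) (hne : μ₀ ≠ 0) : c μ₀ = 0 := by
  classical
  have hpoly : ∀ p : R[X], ∑ μ ∈ s, c μ * μ * p.eval μ = 0 := by
    intro p
    induction p using Polynomial.induction_on' with
    | add p q hp hq => simp only [eval_add, mul_add, Finset.sum_add_distrib, hp, hq, add_zero]
    | monomial k a =>
      calc ∑ μ ∈ s, c μ * μ * (monomial k a).eval μ = a * ∑ μ ∈ s, c μ * μ ^ (k + 1) := by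
            simp only [eval_monomial, Finset.mul_sum, pow_succ']
            exact Finset.sum_congr rfl fun _ _ ↦ by ring
        _ = 0 := by rw [h _ k.succ_pos, mul_zero]
  have hsingle := hpoly (Lagrange.nodal (s.erase μ₀) id)
  rw [Finset.sum_eq_single_of_mem μ₀ hμ₀ fun μ hμ hμμ₀ ↦ mul_eq_zero_of_right _
    (show eval μ _ = 0 from
      Lagrange.eval_nodal_at_node (v := id) (Finset.mem_erase.mpr ⟨hμμ₀, hμ⟩))] at hsingle
  have hnodal : (Lagrange.nodal (s.erase μ₀) id).eval μ₀ ≠ 0 :=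
    Lagrange.eval_nodal_not_at_node fun ν hν ↦ (Finset.ne_of_mem_erase hν).symm
  simpa [hne, hnodal] using hsingle

theorem Module.End.isNilpotent_of_forall_trace_pow_eq_zero {K V : Type*} [Field K] [IsAlgClosed K]
    [CharZero K] [AddCommGroup V] [Module K V] [FiniteDimensional K V] {f : End K V}
    (h : ∀ k, 0 < k → LinearMap.trace K V (f ^ k) = 0) : IsNilpotent f := by
  have hbot : ∀ μ ≠ 0, f.maxGenEigenspace μ = ⊥ := by
    intro μ hμ
    by_contra hne
    have hfinrank := Finset.eq_zero_of_forall_sum_mul_pow_eq_zero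
      (c := fun μ ↦ (finrank K (f.maxGenEigenspace μ) : K))
      (fun k hk ↦ by rw [← f.trace_pow_eq_sum_finrank_mul_pow, h k hk])
      (f.finite_maxGenEigenspace_ne_bot.mem_toFinset.mpr hne) hμ
    exact hne (Submodule.finrank_eq_zero.mp (by exact_mod_cast hfinrank))
  have htop : f.maxGenEigenspace 0 = ⊤ := by
    rw [eq_top_iff, ← f.iSup_maxGenEigenspace_eq_top]
    refine iSup_le fun μ ↦ ?_
    rcases eq_or_ne μ 0 with rfl | hμ
    · exact le_rfl
    · simp [hbot μ hμ]
  refine ((LinearMap.charpoly_nilpotent_tfae f).out 0 3).mpr ?_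
  rw [← LinearMap.finrank_maxGenEigenspace_zero_eq, htop, finrank_top]

namespace Matrix

variable {ι : Type*} [Fintype ι]

theorem trace_mul_commutator_eq_zero {R : Type*} [CommRing R] {B A X : Matrix ι ι R}
    (h : Commute B X) : (B * (X * A - A * X)).trace = 0 := by
  rw [mul_sub, trace_sub, ← mul_assoc, h.eq, mul_assoc, trace_mul_comm X, ← mul_assoc, sub_self]

variable [DecidableEq ι]

theorem isNilpotent_of_forall_trace_pow_eq_zero {K : Type*} [Field K] [IsAlgClosed K] [CharZero K]
    {M : Matrix ι ι K} (h : ∀ k, 0 < k → (M ^ k).trace = 0) : IsNilpotent M := by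
  rw [← isNilpotent_toLin'_iff]
  exact Module.End.isNilpotent_of_forall_trace_pow_eq_zero fun k hk ↦ by
    rw [← toLin'_pow, trace_toLin'_eq, h k hk]

theorem isNilpotent_commutator_of_commute {K : Type*} [Field K] [IsAlgClosed K] [CharZero K]
    {A X : Matrix ι ι K} (h : Commute (X * A - A * X) X) : IsNilpotent (X * A - A * X) :=
  isNilpotent_of_forall_trace_pow_eq_zero fun k hk ↦ by
    obtain ⟨m, rfl⟩ := Nat.exists_eq_succ_of_ne_zero hk.ne'
    rw [pow_succ]
    exact trace_mul_commutator_eq_zero (h.pow_left _)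

theorem pow_card_eq_zero_of_isNilpotent {R : Type*} [CommRing R] [IsDomain R]
    {M : Matrix ι ι R} (hM : IsNilpotent M) : M ^ Fintype.card ι = 0 := by
  have hchar : M.charpoly = X ^ Fintype.card ι :=
    sub_eq_zero.mp (isNilpotent_charpoly_sub_pow_of_isNilpotent hM).eq_zero
  simpa [hchar] using M.aeval_self_charpoly

end Matrix

theorem Polynomial.aeval_eq_sum_range_of_pow_eq_zero {R A : Type*} [CommSemiring R] [Semiring A]
    [Algebra R A] {a : A} {n : ℕ} (ha : a ^ n = 0) (p : R[X]) :
    aeval a p = ∑ k ∈ Finset.range n, p.coeff k • a ^ k := by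
  rw [aeval_eq_sum_range' (show p.natDegree < n + p.natDegree + 1 by omega)]
  refine (Finset.sum_subset (Finset.range_subset_range.mpr (by omega)) fun k _ hk ↦ ?_).symm
  rw [pow_eq_zero_of_le (not_lt.mp (Finset.mem_range.not.mp hk)) ha, smul_zero]

theorem stmt15 (n : ℕ) (hn : 1 ≤ n) (q : Polynomial ℂ)
    (A X : Matrix (Fin n) (Fin n) ℂ)
    (h : Polynomial.aeval (X * A - A * X) q = X) :
    IsNilpotent (X * A - A * X) ∧
    IsNilpotent (X - Polynomial.eval 0 q • (1 : Matrix (Fin n) (Fin n) ℂ)) ∧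
    ∑ k ∈ Finset.Icc 1 (n - 1), q.coeff k • (X * A - A * X) ^ k =
      X - Polynomial.eval 0 q • (1 : Matrix (Fin n) (Fin n) ℂ) := by
  set C := X * A - A * X
  have hcomm : Commute C X := by
    simpa [h] using (Commute.all Polynomial.X q).map (aeval C)
  have hCnil : IsNilpotent C := Matrix.isNilpotent_commutator_of_commute hcomm
  have hCn : C ^ n = 0 := by simpa using Matrix.pow_card_eq_zero_of_isNilpotent hCnil
  have hsum : ∑ k ∈ Finset.Icc 1 (n - 1), q.coeff k • C ^ k = X - eval 0 q • 1 := by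
    rw [← h, aeval_eq_sum_range_of_pow_eq_zero hCn, Finset.sum_range_eq_add_Ico _ hn,
      pow_zero, coeff_zero_eq_eval_zero, add_sub_cancel_left,
      Finset.Icc_sub_one_right_eq_Ico_of_not_isMin (by simpa using Nat.one_le_iff_ne_zero.mp hn)]
  refine ⟨hCnil, ?_, hsum⟩
  rw [← hsum]
  refine Commute.isNilpotent_sum (fun k hk ↦ ?_)
    fun i j _ _ ↦ (((Commute.refl C).pow_pow i j).smul_left _).smul_right _
  exact (hCnil.pow_of_pos (Nat.one_le_iff_ne_zero.mp (Finset.mem_Icc.mp hk).1)).smul _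
end

section
/- Let A be a 3×3 complex matrix having three pairwise distinct eigenvalues, i.e. there exist pairwise distinct u, v, w in the spectrum of A. Then the equation (XA − AX)² = X admits a nonzero solution X in M₃(ℂ). -/
open Matrix

lemma det_zero_of_spec (A : Matrix (Fin 3) (Fin 3) ℂ) (u : ℂ) (hu : u ∈ spectrum ℂ A) :
    (u • (1 : Matrix (Fin 3) (Fin 3) ℂ) - A).det = 0 := by
  rw [spectrum.mem_iff, Algebra.algebraMap_eq_smul_one] at hu
  by_contra h
  exact hu ((Matrix.isUnit_iff_isUnit_det _).mpr (isUnit_iff_ne_zero.mpr h))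

lemma exists_eigvec (A : Matrix (Fin 3) (Fin 3) ℂ) (u : ℂ)
    (h : (u • (1 : Matrix (Fin 3) (Fin 3) ℂ) - A).det = 0) :
    ∃ x : Fin 3 → ℂ, x ≠ 0 ∧ A.mulVec x = u • x := by
  obtain ⟨x, hx, hx0⟩ := (Matrix.exists_mulVec_eq_zero_iff).mpr h
  refine ⟨x, hx, ?_⟩
  rw [Matrix.sub_mulVec, Matrix.smul_mulVec, Matrix.one_mulVec, sub_eq_zero] at hx0
  exact hx0.symm

lemma orth_lem (A : Matrix (Fin 3) (Fin 3) ℂ) (s t : ℂ) (x y : Fin 3 → ℂ)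
    (hx : A.mulVec x = t • x) (hy : A.vecMul y = s • y) (hst : s ≠ t) :
    y ⬝ᵥ x = 0 := by
  have h1 : y ⬝ᵥ (A.mulVec x) = (A.vecMul y) ⬝ᵥ x := Matrix.dotProduct_mulVec y A x
  rw [hx, hy, dotProduct_smul, smul_dotProduct] at h1
  have h2 := sub_eq_zero.mpr h1
  rw [← sub_smul] at h2
  rcases smul_eq_zero.mp h2 with h | h
  · exact absurd (sub_eq_zero.mp h).symm hst
  · exact h


lemma dot_ne (A : Matrix (Fin 3) (Fin 3) ℂ) (u v w : ℂ)
    (huv : u ≠ v) (huw : u ≠ w) (hvw : v ≠ w)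
    (xu xv xw : Fin 3 → ℂ) (hxu0 : xu ≠ 0) (hxv0 : xv ≠ 0) (hxw0 : xw ≠ 0)
    (hxu : A.mulVec xu = u • xu) (hxv : A.mulVec xv = v • xv) (hxw : A.mulVec xw = w • xw)
    (y : Fin 3 → ℂ) (hy0 : y ≠ 0) (hy : A.vecMul y = u • y) :
    y ⬝ᵥ xu ≠ 0 := by
  have li : LinearIndependent ℂ ![xu, xv, xw] := by
    refine Module.End.eigenvectors_linearIndependent' (Matrix.mulVecLin A) (ι := Fin 3)
      ![u, v, w] ?_ ![xu, xv, xw] ?_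
    · intro i j hij
      fin_cases i <;> fin_cases j <;> simp_all
    · intro i
      fin_cases i <;>
        exact ⟨Module.End.mem_eigenspace_iff.mpr (by simpa using by assumption), by assumption⟩
  have hcard : Fintype.card (Fin 3) = Module.finrank ℂ (Fin 3 → ℂ) := by simp
  let b := basisOfLinearIndependentOfCardEqFinrank li hcard
  have hb : ⇑b = ![xu, xv, xw] := coe_basisOfLinearIndependentOfCardEqFinrank li hcard
  intro hdot
  have hbz : ∀ i, y ⬝ᵥ b i = 0 := by
    intro i
    rw [hb]
    fin_cases i
    · simpa using hdot
    · simpa using orth_lem A u v xv y hxv hy huv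
    · simpa using orth_lem A u w xw y hxw hy huw
  have hall : ∀ x : Fin 3 → ℂ, y ⬝ᵥ x = 0 := by
    intro x
    rw [← b.sum_repr x]
    simp only [dotProduct, Finset.sum_apply, Pi.smul_apply, smul_eq_mul, Finset.mul_sum]
    rw [Finset.sum_comm]
    refine Finset.sum_eq_zero fun i _ => ?_
    have h0 := hbz i
    simp only [dotProduct] at h0
    calc ∑ j, y j * ((b.repr x) i * b i j) = (b.repr x) i * ∑ j, y j * b i j := by
          rw [Finset.mul_sum]; exact Finset.sum_congr rfl fun j _ => by ring
      _ = 0 := by rw [h0, mul_zero]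
  apply hy0
  funext j
  have := hall (Pi.single j 1)
  rwa [dotProduct_single, mul_one] at this

set_option maxHeartbeats 1000000 in
lemma Ysol (u v w : ℂ) (huv : u ≠ v) (huw : u ≠ w) (hvw : v ≠ w) :
    ∃ Y : Matrix (Fin 3) (Fin 3) ℂ, Y 0 1 ≠ 0 ∧
      (Y * !![u,0,0; 0,v,0; 0,0,w] - !![u,0,0; 0,v,0; 0,0,w] * Y) ^ 2 = Y := by
  have h1 : v - u ≠ 0 := sub_ne_zero.mpr (Ne.symm huv)
  have h2 : w - u ≠ 0 := sub_ne_zero.mpr (Ne.symm huw)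
  have h3 : w - v ≠ 0 := sub_ne_zero.mpr (Ne.symm hvw)
  set d1 := v - u
  set d2 := w - u
  set d3 := w - v
  refine ⟨!![1/(d2*d3) - 1/(d1*d3), 1/(d1*d2), 1/d2^2;
            -1/(d1*d3), 1/(d2*d3) + 1/(d1*d2), 1/(d2*d3);
            1/(d1*d3), -1/(d1*d3), 1/(d1*d2) - 1/(d1*d3)],
          by norm_num [h1, h2], ?_⟩
  have hC : (!![1/(d2*d3) - 1/(d1*d3), 1/(d1*d2), 1/d2^2;
            -1/(d1*d3), 1/(d2*d3) + 1/(d1*d2), 1/(d2*d3);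
            1/(d1*d3), -1/(d1*d3), 1/(d1*d2) - 1/(d1*d3)] * !![u,0,0; 0,v,0; 0,0,w]
      - !![u,0,0; 0,v,0; 0,0,w] * !![1/(d2*d3) - 1/(d1*d3), 1/(d1*d2), 1/d2^2;
            -1/(d1*d3), 1/(d2*d3) + 1/(d1*d2), 1/(d2*d3);
            1/(d1*d3), -1/(d1*d3), 1/(d1*d2) - 1/(d1*d3)])
      = !![0, 1/d2, 1/d2; 1/d3, 0, 1/d2; -(d2/(d1*d3)), 1/d1, 0] := by
    ext i j
    fin_cases i <;> fin_cases j <;>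
      · simp [Matrix.mul_apply, Fin.sum_univ_three]
        try field_simp
        try ring
  rw [pow_two, hC]
  ext i j
  fin_cases i <;> fin_cases j <;>
    · simp [Matrix.mul_apply, Fin.sum_univ_three]
      try field_simp
      try ring

theorem stmt17 (A : Matrix (Fin 3) (Fin 3) ℂ) (u v w : ℂ)
    (hu : u ∈ spectrum ℂ A) (hv : v ∈ spectrum ℂ A) (hw : w ∈ spectrum ℂ A)
    (huv : u ≠ v) (huw : u ≠ w) (hvw : v ≠ w) :
    ∃ X : Matrix (Fin 3) (Fin 3) ℂ, X ≠ 0 ∧ (X * A - A * X) ^ 2 = X := by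
  -- right eigenvectors
  obtain ⟨xu, hxu0, hxu⟩ := exists_eigvec A u (det_zero_of_spec A u hu)
  obtain ⟨xv, hxv0, hxv⟩ := exists_eigvec A v (det_zero_of_spec A v hv)
  obtain ⟨xw, hxw0, hxw⟩ := exists_eigvec A w (det_zero_of_spec A w hw)
  -- left eigenvectors
  have hdetT : ∀ t : ℂ, (t • (1 : Matrix (Fin 3) (Fin 3) ℂ) - A).det = 0 →
      (t • (1 : Matrix (Fin 3) (Fin 3) ℂ) - Aᵀ).det = 0 := by
    intro t ht
    rw [show t • (1 : Matrix (Fin 3) (Fin 3) ℂ) - Aᵀ = (t • 1 - A)ᵀ by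
      rw [Matrix.transpose_sub, Matrix.transpose_smul, Matrix.transpose_one]]
    rw [Matrix.det_transpose]
    exact ht
  have getleft : ∀ t : ℂ, t ∈ spectrum ℂ A →
      ∃ y : Fin 3 → ℂ, y ≠ 0 ∧ A.vecMul y = t • y := by
    intro t ht
    obtain ⟨y, hy0, hy⟩ := exists_eigvec Aᵀ t (hdetT t (det_zero_of_spec A t ht))
    exact ⟨y, hy0, by rwa [Matrix.mulVec_transpose] at hy⟩
  obtain ⟨yu, hyu0, hyu⟩ := getleft u hu
  obtain ⟨yv, hyv0, hyv⟩ := getleft v hv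
  obtain ⟨yw, hyw0, hyw⟩ := getleft w hw
  -- nondegeneracy
  have hcu : yu ⬝ᵥ xu ≠ 0 := dot_ne A u v w huv huw hvw xu xv xw hxu0 hxv0 hxw0 hxu hxv hxw yu hyu0 hyu
  have hcv : yv ⬝ᵥ xv ≠ 0 := dot_ne A v u w huv.symm hvw huw xv xu xw hxv0 hxu0 hxw0 hxv hxu hxw yv hyv0 hyv
  have hcw : yw ⬝ᵥ xw ≠ 0 := dot_ne A w u v huw.symm hvw.symm huv xw xu xv hxw0 hxu0 hxv0 hxw hxu hxv yw hyw0 hyw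
  -- normalized left eigenvectors
  set fu : Fin 3 → ℂ := (yu ⬝ᵥ xu)⁻¹ • yu with hfu
  set fv : Fin 3 → ℂ := (yv ⬝ᵥ xv)⁻¹ • yv with hfv
  set fw : Fin 3 → ℂ := (yw ⬝ᵥ xw)⁻¹ • yw with hfw
  -- matrices
  set P : Matrix (Fin 3) (Fin 3) ℂ := Matrix.of (fun i j => ![xu, xv, xw] j i) with hP
  set Q : Matrix (Fin 3) (Fin 3) ℂ := Matrix.of (fun i j => ![fu, fv, fw] i j) with hQ
  set D : Matrix (Fin 3) (Fin 3) ℂ := !![u,0,0; 0,v,0; 0,0,w] with hD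
  have hQP : Q * P = 1 := by
    have one : fu ⬝ᵥ xu = 1 := by
      rw [hfu, smul_dotProduct, smul_eq_mul, inv_mul_cancel₀ hcu]
    have two : fv ⬝ᵥ xv = 1 := by
      rw [hfv, smul_dotProduct, smul_eq_mul, inv_mul_cancel₀ hcv]
    have three : fw ⬝ᵥ xw = 1 := by
      rw [hfw, smul_dotProduct, smul_eq_mul, inv_mul_cancel₀ hcw]
    have o12 : fu ⬝ᵥ xv = 0 := by
      rw [hfu, smul_dotProduct, smul_eq_mul, orth_lem A u v xv yu hxv hyu huv, mul_zero]
    have o13 : fu ⬝ᵥ xw = 0 := by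
      rw [hfu, smul_dotProduct, smul_eq_mul, orth_lem A u w xw yu hxw hyu huw, mul_zero]
    have o21 : fv ⬝ᵥ xu = 0 := by
      rw [hfv, smul_dotProduct, smul_eq_mul, orth_lem A v u xu yv hxu hyv huv.symm, mul_zero]
    have o23 : fv ⬝ᵥ xw = 0 := by
      rw [hfv, smul_dotProduct, smul_eq_mul, orth_lem A v w xw yv hxw hyv hvw, mul_zero]
    have o31 : fw ⬝ᵥ xu = 0 := by
      rw [hfw, smul_dotProduct, smul_eq_mul, orth_lem A w u xu yw hxu hyw huw.symm, mul_zero]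
    have o32 : fw ⬝ᵥ xv = 0 := by
      rw [hfw, smul_dotProduct, smul_eq_mul, orth_lem A w v xv yw hxv hyw hvw.symm, mul_zero]
    ext i j
    have hmul : (Q * P) i j = (![fu, fv, fw] i) ⬝ᵥ (![xu, xv, xw] j) := by
      simp [Matrix.mul_apply, dotProduct, hP, hQ]
    rw [hmul]
    fin_cases i <;> fin_cases j
    · simpa [Matrix.one_apply] using one
    · simpa [Matrix.one_apply] using o12
    · simpa [Matrix.one_apply] using o13
    · simpa [Matrix.one_apply] using o21
    · simpa [Matrix.one_apply] using two
    · simpa [Matrix.one_apply] using o23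
    · simpa [Matrix.one_apply] using o31
    · simpa [Matrix.one_apply] using o32
    · simpa [Matrix.one_apply] using three
  have hPQ : P * Q = 1 := mul_eq_one_comm.mp hQP
  have eig_entry : ∀ (x : Fin 3 → ℂ) (t : ℂ), A.mulVec x = t • x →
      ∀ i, A i 0 * x 0 + A i 1 * x 1 + A i 2 * x 2 = x i * t := by
    intro x t hx i
    have := congrFun hx i
    simp only [Matrix.mulVec, dotProduct, Fin.sum_univ_three, Pi.smul_apply,
      smul_eq_mul] at this
    rw [this]; ring
  have hAP : A * P = P * D := by
    ext i j
    fin_cases j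
    · simpa [hP, hD, Matrix.mul_apply, Fin.sum_univ_three, Matrix.vecHead, Matrix.vecTail]
        using eig_entry xu u hxu i
    · simpa [hP, hD, Matrix.mul_apply, Fin.sum_univ_three, Matrix.vecHead, Matrix.vecTail]
        using eig_entry xv v hxv i
    · simpa [hP, hD, Matrix.mul_apply, Fin.sum_univ_three, Matrix.vecHead, Matrix.vecTail]
        using eig_entry xw w hxw i
  have hQA : Q * A = D * Q := by
    calc Q * A = Q * A * (P * Q) := by rw [hPQ, mul_one]
      _ = Q * (A * P) * Q := by rw [← mul_assoc, mul_assoc Q A P]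
      _ = Q * (P * D) * Q := by rw [hAP]
      _ = (Q * P) * D * Q := by rw [← mul_assoc]
      _ = D * Q := by rw [hQP, one_mul]
  obtain ⟨Y, hY01, hYeq⟩ := Ysol u v w huv huw hvw
  refine ⟨P * Y * Q, ?_, ?_⟩
  · intro hX0
    have : Y = 0 := by
      calc Y = 1 * Y * 1 := by rw [one_mul, mul_one]
        _ = (Q * P) * Y * (Q * P) := by rw [hQP]
        _ = Q * (P * Y * Q) * P := by noncomm_ring
        _ = 0 := by rw [hX0, mul_zero, zero_mul]
    rw [this] at hY01
    simp at hY01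
  · have hcomm : P * Y * Q * A - A * (P * Y * Q) = P * (Y * D - D * Y) * Q := by
      calc P * Y * Q * A - A * (P * Y * Q)
          = P * Y * (Q * A) - (A * P) * Y * Q := by noncomm_ring
        _ = P * Y * (D * Q) - (P * D) * Y * Q := by rw [hQA, hAP]
        _ = P * (Y * D - D * Y) * Q := by noncomm_ring
    rw [hcomm, pow_two]
    calc P * (Y * D - D * Y) * Q * (P * (Y * D - D * Y) * Q)
        = P * ((Y * D - D * Y) * (Q * P) * (Y * D - D * Y)) * Q := by noncomm_ring
      _ = P * ((Y * D - D * Y) * (Y * D - D * Y)) * Q := by rw [hQP, mul_one]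
      _ = P * ((Y * D - D * Y) ^ 2) * Q := by rw [pow_two]
      _ = P * Y * Q := by rw [hYeq]
end

section
/- Let u, v be distinct complex numbers and let A = diag(u, v) be the 2×2 diagonal matrix. Then every solution X ∈ M₂(ℂ) of the equation (XA − AX)² = X² has trace zero, and there exists a solution X of this equation that is not nilpotent. -/
lemma aux_not_nilpotent (X : Matrix (Fin 2) (Fin 2) ℂ) (t : ℂ) (ht : t ≠ 0)
    (h : X ^ 2 = t • (1 : Matrix (Fin 2) (Fin 2) ℂ)) : ¬ IsNilpotent X := by
  rintro ⟨n, hn⟩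
  have h1 : X ^ (2 * n) = (t ^ n) • (1 : Matrix (Fin 2) (Fin 2) ℂ) := by
    rw [pow_mul, h, smul_pow, one_pow]
  have h2 : X ^ (2 * n) = 0 := by
    rw [mul_comm, pow_mul, hn]
    simp
  rw [h2] at h1
  have := congrFun (congrFun h1.symm 0) 0
  simp [Matrix.one_apply] at this
  exact ht this.1

theorem stmt19 (u v : ℂ) (huv : u ≠ v)
    (A : Matrix (Fin 2) (Fin 2) ℂ) (hA : A = Matrix.diagonal ![u, v]) :
    (∀ X : Matrix (Fin 2) (Fin 2) ℂ, (X * A - A * X) ^ 2 = X ^ 2 → X.trace = 0) ∧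
    (∃ X : Matrix (Fin 2) (Fin 2) ℂ, (X * A - A * X) ^ 2 = X ^ 2 ∧ ¬ IsNilpotent X) := by
  subst hA
  constructor
  · intro X h
    have h00 := congrFun (congrFun h 0) 0
    have h01 := congrFun (congrFun h 0) 1
    have h10 := congrFun (congrFun h 1) 0
    have h11 := congrFun (congrFun h 1) 1
    simp [pow_two, Matrix.mul_apply, Matrix.sub_apply, Matrix.diagonal,
      Fin.sum_univ_two] at h00 h01 h10 h11
    rw [Matrix.trace_fin_two]
    have e1 : X 0 1 * (X 0 0 + X 1 1) = 0 := by linear_combination -h01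
    have e2 : X 1 0 * (X 0 0 + X 1 1) = 0 := by linear_combination -h10
    rcases mul_eq_zero.mp e1 with hb | hs
    · rcases mul_eq_zero.mp e2 with hc | hs
      · have ha : X 0 0 * X 0 0 = 0 := by
          linear_combination ((v - u) * (X 1 0 * u - v * X 1 0) - X 1 0) * hb - h00
        have hd : X 1 1 * X 1 1 = 0 := by
          linear_combination ((X 1 0 * u - v * X 1 0) * (v - u) - X 1 0) * hb - h11
        rw [mul_self_eq_zero] at ha hd
        rw [ha, hd, add_zero]
      · exact hs
    · exact hs
  · have hw : (u - v) ^ 2 ≠ 0 := pow_ne_zero _ (sub_ne_zero.mpr huv)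
    have hD : Matrix.diagonal ![u, v] = !![u, 0; 0, v] := by
      ext i j
      fin_cases i <;> fin_cases j <;> simp [Matrix.diagonal]
    rw [hD]
    by_cases h1 : 1 + (u - v) ^ 2 = 0
    · refine ⟨!![0, 1; 1, 0], ?_, ?_⟩
      · ext i j
        fin_cases i <;> fin_cases j <;>
          simp [pow_two, Matrix.mul_apply, Matrix.sub_apply,
            Fin.sum_univ_two] <;> linear_combination -h1
      · refine aux_not_nilpotent _ 1 one_ne_zero ?_
        ext i j
        fin_cases i <;> fin_cases j <;>
          simp [pow_two, Matrix.mul_apply, Fin.sum_univ_two, Matrix.one_apply]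
    · refine ⟨!![1 + (u - v) ^ 2, 1; -(1 + (u - v) ^ 2), -(1 + (u - v) ^ 2)], ?_, ?_⟩
      · ext i j
        fin_cases i <;> fin_cases j <;>
          simp [pow_two, Matrix.mul_apply, Matrix.sub_apply,
            Fin.sum_univ_two] <;> ring
      · refine aux_not_nilpotent _ ((u - v) ^ 2 * (1 + (u - v) ^ 2))
          (mul_ne_zero hw h1) ?_
        ext i j
        fin_cases i <;> fin_cases j <;>
          simp [pow_two, Matrix.mul_apply, Fin.sum_univ_two, Matrix.one_apply] <;> ring
end
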